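/- arXiv:1804.09672 — 12 statements merged into one kernel-verified Lean document; each statement's English description precedes it below -/
import Mathlib

section
/- Let f be a min cost flow from a supply vector s to a demand vector d, and let S = {(x,y) ∈ V × V : f(x,y) > 0}. Then for every bijection σ : S → S we have Σ_{(w,z)∈S} ℓ(w, π₂(σ(w,z))) ≥ Σ_{(w,z)∈S} ℓ(w,z), where π₂ denotes the second coordinate of a pair. Equivalently, in the unit-demand market induced by f, the identity assignment of item m_{wz} to bidder b_{wz} maximizes the total value Σ_{(w,z)∈S} (C − ℓ(w, π₂(assigned item))) over all bijective assignments of items to bidders. -/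
/-- A flow from supply `s` to supply `s'`. -/
def IsFlow {V : Type*} [Fintype V] (f : V → V → ℝ) (s s' : V → ℝ) : Prop :=
  (∀ u v, 0 ≤ f u v) ∧ (∀ u, ∑ v, f u v = s u) ∧ (∀ v, ∑ u, f u v = s' v)

/-- The cost of a flow. -/
def flowCost {V : Type*} [Fintype V] (ℓ f : V → V → ℝ) : ℝ :=
  ∑ u, ∑ v, f u v * ℓ u v

/-- `f` is a minimum cost flow from `s` to `s'`. -/
def IsMinCostFlow {V : Type*} [Fintype V] (ℓ f : V → V → ℝ) (s s' : V → ℝ) : Prop :=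
  IsFlow f s s' ∧ ∀ g, IsFlow g s s' → flowCost ℓ f ≤ flowCost ℓ g

section Aux

variable {V : Type*} [Fintype V] [DecidableEq V]

private lemma stmt0_L1 (T : Finset (V × V)) (φ : V × V → V × V) (u : V) :
    ∑ v, ∑ q ∈ T, (if φ q = (u, v) then (1:ℝ) else 0)
      = ∑ q ∈ T, if (φ q).1 = u then 1 else 0 := by
  rw [Finset.sum_comm]
  refine Finset.sum_congr rfl fun q _ => ?_
  by_cases h : (φ q).1 = u
  · simp [Prod.ext_iff, h]
  · simp [Prod.ext_iff, h]

private lemma stmt0_L2 (T : Finset (V × V)) (φ : V × V → V × V) (v : V) :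
    ∑ u, ∑ q ∈ T, (if φ q = (u, v) then (1:ℝ) else 0)
      = ∑ q ∈ T, if (φ q).2 = v then 1 else 0 := by
  rw [Finset.sum_comm]
  refine Finset.sum_congr rfl fun q _ => ?_
  by_cases h : (φ q).2 = v
  · simp [Prod.ext_iff, h]
  · simp [Prod.ext_iff, h]

private lemma stmt0_L3 (T : Finset (V × V)) (φ : V × V → V × V) (ℓ : V → V → ℝ) :
    ∑ u, ∑ v, (∑ q ∈ T, if φ q = (u, v) then (1:ℝ) else 0) * ℓ u v
      = ∑ q ∈ T, ℓ (φ q).1 (φ q).2 := by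
  have : ∀ u v, (∑ q ∈ T, if φ q = (u, v) then (1:ℝ) else 0) * ℓ u v
      = ∑ q ∈ T, if φ q = (u, v) then ℓ u v else 0 := by
    intro u v
    rw [Finset.sum_mul]
    exact Finset.sum_congr rfl fun q _ => by split <;> simp
  simp_rw [this]
  rw [← Fintype.sum_prod_type']
  rw [Finset.sum_comm]
  refine Finset.sum_congr rfl fun q _ => ?_
  simp [Finset.sum_ite_eq]

end Aux

/-- if `f` is a min cost flow from supply `s` to demand `d` with support `S`,
then for every bijection `σ` of `S` onto itself,
`∑_{(w,z)∈S} ℓ(w,z) ≤ ∑_{(w,z)∈S} ℓ(w, π₂(σ(w,z)))`; equivalently, the identity assignment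
maximizes total value in the unit-demand market induced by `f`. -/
theorem stmt0 {V : Type*} [Fintype V] [Nonempty V] [DecidableEq V]
    (ℓ : V → V → ℝ)
    (hl0 : ∀ u, ℓ u u = 0) (hlsymm : ∀ u v, ℓ u v = ℓ v u)
    (hlnn : ∀ u v, 0 ≤ ℓ u v) (hltri : ∀ u v w, ℓ u w ≤ ℓ u v + ℓ v w)
    (s d : V → ℝ)
    (hs0 : ∀ v, 0 ≤ s v) (hs1 : ∑ v, s v = 1)
    (hd0 : ∀ v, 0 ≤ d v) (hd1 : ∑ v, d v = 1)
    (f : V → V → ℝ) (hf : IsMinCostFlow ℓ f s d)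
    (S : Finset (V × V)) (hS : S = Finset.univ.filter fun p : V × V => 0 < f p.1 p.2)
    (σ : V × V → V × V) (hσ : Set.BijOn σ ↑S ↑S) :
    ∑ p ∈ S, ℓ p.1 p.2 ≤ ∑ p ∈ S, ℓ p.1 (σ p).2 := by
  rcases Finset.eq_empty_or_nonempty S with hSe | hSne
  · simp [hSe]
  obtain ⟨⟨hfnn, hfrow, hfcol⟩, hmin⟩ := hf
  set ε : ℝ := S.inf' hSne (fun p => f p.1 p.2) with hε
  have hfpos : ∀ p ∈ S, 0 < f p.1 p.2 := by
    intro p hp; rw [hS, Finset.mem_filter] at hp; exact hp.2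
  have hεpos : 0 < ε := by
    rw [hε, Finset.lt_inf'_iff]
    exact hfpos
  have hεle : ∀ p ∈ S, ε ≤ f p.1 p.2 := fun p hp => Finset.inf'_le _ hp
  -- the rerouted flow
  set a : V → V → ℝ := fun u v => ∑ q ∈ S, if (q.1, (σ q).2) = (u, v) then (1:ℝ) else 0
    with ha
  set b : V → V → ℝ := fun u v => ∑ q ∈ S, if q = (u, v) then (1:ℝ) else 0 with hb
  set g : V → V → ℝ := fun u v => f u v + ε * a u v - ε * b u v with hg
  have hannR : ∀ u v, 0 ≤ a u v := fun u v =>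
    Finset.sum_nonneg fun q _ => by split <;> norm_num
  have hbval : ∀ u v, b u v = if (u, v) ∈ S then 1 else 0 := by
    intro u v
    rw [hb]
    exact Finset.sum_ite_eq' S (u, v) (fun _ => (1:ℝ))
  -- g is a flow
  have hgflow : IsFlow g s d := by
    refine ⟨?_, ?_, ?_⟩
    · intro u v
      rw [hg]
      simp only
      rw [hbval]
      by_cases h : (u, v) ∈ S
      · simp only [h, if_pos]
        have := hεle (u, v) h
        have := hannR u v
        nlinarith [hεpos.le]
      · simp only [h, if_neg, not_false_iff]
        have := hfnn u v
        have := hannR u v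
        nlinarith [hεpos.le]
    · intro u
      have hsum : ∑ v, g u v
          = (∑ v, f u v) + ε * (∑ v, a u v) - ε * (∑ v, b u v) := by
        simp [hg, Finset.sum_add_distrib, Finset.sum_sub_distrib, Finset.mul_sum]
      have haval : ∑ v, a u v = ∑ q ∈ S, if q.1 = u then (1:ℝ) else 0 := by
        exact stmt0_L1 S (fun q => (q.1, (σ q).2)) u
      have hbval' : ∑ v, b u v = ∑ q ∈ S, if q.1 = u then (1:ℝ) else 0 := by
        exact stmt0_L1 S id u
      rw [hsum, haval, hbval', hfrow]
      ring
    · intro v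
      have hsum : ∑ u, g u v
          = (∑ u, f u v) + ε * (∑ u, a u v) - ε * (∑ u, b u v) := by
        simp [hg, Finset.sum_add_distrib, Finset.sum_sub_distrib, Finset.mul_sum]
      have haval : ∑ u, a u v = ∑ q ∈ S, if (σ q).2 = v then (1:ℝ) else 0 := by
        exact stmt0_L2 S (fun q => (q.1, (σ q).2)) v
      have hbval' : ∑ u, b u v = ∑ q ∈ S, if q.2 = v then (1:ℝ) else 0 := by
        exact stmt0_L2 S id v
      have hperm : ∑ q ∈ S, (if (σ q).2 = v then (1:ℝ) else 0)
          = ∑ q ∈ S, if q.2 = v then (1:ℝ) else 0 := by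
        refine Finset.sum_nbij σ (fun q hq => ?_) ?_ ?_ (fun q hq => rfl)
        · exact_mod_cast hσ.mapsTo (by exact_mod_cast hq)
        · exact_mod_cast hσ.injOn
        · exact_mod_cast hσ.surjOn
      rw [hsum, haval, hbval', hperm, hfcol]
      ring
  -- costs
  have hcost : flowCost ℓ g
      = flowCost ℓ f + ε * (∑ q ∈ S, ℓ q.1 (σ q).2) - ε * (∑ q ∈ S, ℓ q.1 q.2) := by
    have h1 : ∑ u, ∑ v, a u v * ℓ u v = ∑ q ∈ S, ℓ q.1 (σ q).2 := by
      exact stmt0_L3 S (fun q => (q.1, (σ q).2)) ℓ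
    have h2 : ∑ u, ∑ v, b u v * ℓ u v = ∑ q ∈ S, ℓ q.1 q.2 := by
      exact stmt0_L3 S id ℓ
    have : flowCost ℓ g = flowCost ℓ f + ε * (∑ u, ∑ v, a u v * ℓ u v)
        - ε * (∑ u, ∑ v, b u v * ℓ u v) := by
      have expand : ∀ u v, g u v * ℓ u v
          = f u v * ℓ u v + ε * (a u v * ℓ u v) - ε * (b u v * ℓ u v) := fun u v => by
        show (f u v + ε * a u v - ε * b u v) * ℓ u v = _; ring
      simp only [flowCost]
      simp_rw [expand, Finset.sum_sub_distrib, Finset.sum_add_distrib, ← Finset.mul_sum]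
    rw [this, h1, h2]
  have hle := hmin g hgflow
  rw [hcost] at hle
  have : ε * (∑ q ∈ S, ℓ q.1 q.2) ≤ ε * (∑ q ∈ S, ℓ q.1 (σ q).2) := by linarith
  exact le_of_mul_le_mul_left this hεpos
end

section
/- Let f be a min cost flow from supply s to demand d with support S, and let p : S → ℝ be prices and π : S → S a bijection (assigning item π(b) to bidder b) that are envy-free: for all (w,z), (x,y) ∈ S, (C − ℓ(w, π₂(π(w,z)))) − p(π(w,z)) ≥ (C − ℓ(w,y)) − p(x,y). Then any two items with the same destination have the same price: for all (x,y), (x',y) ∈ S, p(x,y) = p(x',y). -/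
/-- in the unit-demand market induced by a min cost flow `f` from `s` to `d`
(with support `S`, value of bidder `(w,z)` for item `(x,y)` equal to `C - ℓ w y` where
`C = 1 + max ℓ`), if prices `p` and a bijective assignment `π : S → S` are envy-free,
then any two items with the same destination have the same price. -/
theorem stmt1 {V : Type*} [Fintype V] [Nonempty V] [DecidableEq V]
    (ℓ : V → V → ℝ)
    (hl0 : ∀ u, ℓ u u = 0) (hlsymm : ∀ u v, ℓ u v = ℓ v u)
    (hlnn : ∀ u v, 0 ≤ ℓ u v) (hltri : ∀ u v w, ℓ u w ≤ ℓ u v + ℓ v w)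
    (s d : V → ℝ)
    (hs0 : ∀ v, 0 ≤ s v) (hs1 : ∑ v, s v = 1)
    (hd0 : ∀ v, 0 ≤ d v) (hd1 : ∑ v, d v = 1)
    (f : V → V → ℝ) (hf : IsMinCostFlow ℓ f s d)
    (S : Finset (V × V)) (hS : S = Finset.univ.filter fun p : V × V => 0 < f p.1 p.2)
    (C : ℝ) (hC : IsGreatest {c : ℝ | ∃ i j : V, c = 1 + ℓ i j} C)
    (p : V × V → ℝ) (π : V × V → V × V) (hπ : Set.BijOn π ↑S ↑S)
    (hEF : ∀ wz ∈ S, ∀ xy ∈ S,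
      (C - ℓ wz.1 xy.2) - p xy ≤ (C - ℓ wz.1 (π wz).2) - p (π wz)) :
    ∀ xy ∈ S, ∀ xy' ∈ S, xy.2 = xy'.2 → p xy = p xy' := by
  have key : ∀ a ∈ S, ∀ b ∈ S, a.2 = b.2 → p a ≤ p b := by
    intro a ha b hb hab
    obtain ⟨wz, hwz, hπwz⟩ := hπ.surjOn (Finset.mem_coe.mpr ha)
    have h := hEF wz (Finset.mem_coe.mp hwz) b hb
    rw [hπwz, hab] at h
    linarith
  intro xy h1 xy' h2 h
  exact le_antisymm (key xy h1 xy' h2 h) (key xy' h2 xy h1 h.symm)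
end

section
/- Let f be a min cost flow from supply s to demand d with support S, and let p : S → ℝ support the identity assignment (bidder (w,z) receives item (w,z)) in envy-free equilibrium, i.e. for all (w,z), (x,y) ∈ S: (C − ℓ(w,z)) − p(w,z) ≥ (C − ℓ(w,y)) − p(x,y), and suppose bidder utilities are nonnegative: (C − ℓ(w,z)) − p(w,z) ≥ 0 for all (w,z) ∈ S. Define surge prices r_y = C − p(x,y) for any x with (x,y) ∈ S, and r_y = 0 when d_y = 0. Then for every (x,y) ∈ S: (a) r_y − ℓ(x,y) ≥ r_w − ℓ(x,w) for every w ∈ V with d_w > 0, and (b) r_y − ℓ(x,y) ≥ 0. Consequently, with new supply s' = d, the move x→y maximizes the taxicab utility μ(x→· | d, r, d). -/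
/-- The utility `μ(u → v | s', r, d)` of a taxicab moving from `u` to `v` given new supply
`s'`, surge prices `r` and demand `d`.  (Division by zero is zero in Lean, matching the
convention `0/0 = 0`.) -/
noncomputable def util {V : Type*} (ℓ : V → V → ℝ) (s' r d : V → ℝ) (u v : V) : ℝ :=
  r v * min 1 (d v / s' v) - ℓ u v

/-- given a min cost flow `f` from supply `s` to demand `d` with support `S`,
prices `p` supporting the identity assignment in envy-free equilibrium with nonnegative
bidder utilities, and surge prices `r_y = C − p(x,y)` for `(x,y) ∈ S` (and `r_y = 0` when
`d_y = 0`), then for every `(x,y) ∈ S`: (a) `r_y − ℓ(x,y) ≥ r_w − ℓ(x,w)` whenever `d_w > 0`,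
(b) `r_y − ℓ(x,y) ≥ 0`, and (c) with new supply `s' = d`, the move `x → y` maximizes the
taxicab utility `μ(x → · | d, r, d)`. -/
theorem stmt2 {V : Type*} [Fintype V] [Nonempty V] [DecidableEq V]
    (ℓ : V → V → ℝ)
    (hl0 : ∀ u, ℓ u u = 0) (hlsymm : ∀ u v, ℓ u v = ℓ v u)
    (hlnn : ∀ u v, 0 ≤ ℓ u v) (hltri : ∀ u v w, ℓ u w ≤ ℓ u v + ℓ v w)
    (s d : V → ℝ)
    (hs0 : ∀ v, 0 ≤ s v) (hs1 : ∑ v, s v = 1)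
    (hd0 : ∀ v, 0 ≤ d v) (hd1 : ∑ v, d v = 1)
    (f : V → V → ℝ) (hf : IsMinCostFlow ℓ f s d)
    (S : Finset (V × V)) (hS : S = Finset.univ.filter fun p : V × V => 0 < f p.1 p.2)
    (C : ℝ) (hC : IsGreatest {c : ℝ | ∃ i j : V, c = 1 + ℓ i j} C)
    (p : V × V → ℝ)
    (hEF : ∀ wz ∈ S, ∀ xy ∈ S, (C - ℓ wz.1 xy.2) - p xy ≤ (C - ℓ wz.1 wz.2) - p wz)
    (hnn : ∀ wz ∈ S, 0 ≤ (C - ℓ wz.1 wz.2) - p wz)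
    (r : V → ℝ)
    (hr : ∀ xy ∈ S, r xy.2 = C - p xy)
    (hr0 : ∀ y, d y = 0 → r y = 0) :
    ∀ xy ∈ S,
      (∀ w, 0 < d w → r w - ℓ xy.1 w ≤ r xy.2 - ℓ xy.1 xy.2) ∧
      0 ≤ r xy.2 - ℓ xy.1 xy.2 ∧
      IsGreatest (Set.range fun w => util ℓ d r d xy.1 w) (util ℓ d r d xy.1 xy.2) := by

  intro xy hxy
  obtain ⟨⟨hfnn, hrow, hcol⟩, -⟩ := hf
  have hmem : ∀ ab : V × V, ab ∈ S ↔ 0 < f ab.1 ab.2 := by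
    intro ab; rw [hS]; simp
  -- d is positive where the flow is positive
  have hdpos : ∀ ab : V × V, ab ∈ S → 0 < d ab.2 := by
    intro ab hab
    have h1 : f ab.1 ab.2 ≤ ∑ u, f u ab.2 :=
      Finset.single_le_sum (fun u _ => hfnn u ab.2) (Finset.mem_univ _)
    have := (hmem ab).1 hab
    rw [hcol] at h1
    linarith
  -- (a)
  have ha : ∀ w, 0 < d w → r w - ℓ xy.1 w ≤ r xy.2 - ℓ xy.1 xy.2 := by
    intro w hw
    -- find x' with (x', w) ∈ S
    have hex : ∃ u, 0 < f u w := by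
      by_contra h
      push_neg at h
      have : ∑ u, f u w = 0 := le_antisymm
        (Finset.sum_nonpos (fun u _ => h u)) (Finset.sum_nonneg (fun u _ => hfnn u w))
      rw [hcol] at this; linarith
    obtain ⟨x', hx'⟩ := hex
    have hmem' : (x', w) ∈ S := (hmem (x', w)).2 hx'
    have hEF' := hEF xy hxy (x', w) hmem'
    have h1 := hr xy hxy
    have h2 := hr (x', w) hmem'
    simp only at h1 h2 hEF'
    linarith
  have hry := hr xy hxy
  have hb : 0 ≤ r xy.2 - ℓ xy.1 xy.2 := by
    have := hnn xy hxy; linarith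
  refine ⟨ha, hb, ?_, ?_⟩
  · -- membership in range
    exact ⟨xy.2, rfl⟩
  · rintro z ⟨w, rfl⟩
    simp only []
    have hdy := hdpos xy hxy
    have hutily : util ℓ d r d xy.1 xy.2 = r xy.2 - ℓ xy.1 xy.2 := by
      unfold util
      rw [div_self (ne_of_gt hdy)]
      norm_num
    rw [hutily]
    by_cases hw : 0 < d w
    · have : util ℓ d r d xy.1 w = r w - ℓ xy.1 w := by
        unfold util
        rw [div_self (ne_of_gt hw)]
        norm_num
      rw [this]
      exact ha w hw
    · have hdw : d w = 0 := le_antisymm (not_lt.1 hw) (hd0 w)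
      have : util ℓ d r d xy.1 w = - ℓ xy.1 w := by
        unfold util
        rw [hr0 w hdw]
        ring
      rw [this]
      have := hlnn xy.1 w
      linarith
end

section
/- Let f be a min cost flow from supply s to demand d with support S, let p : S → ℝ support the identity assignment in envy-free equilibrium with nonnegative bidder utilities, and define surge prices r_y = C − p(x,y) for any x with (x,y) ∈ S and r_y = 0 when d_y = 0. Let f' be an arbitrary min cost flow from s to d (possibly f' ≠ f). Then for every x, y with f'(x,y) > 0: r_y − ℓ(x,y) ≥ r_w − ℓ(x,w) for every w ∈ V with d_w > 0, and r_y − ℓ(x,y) ≥ 0. That is, the best-response property of surge prices r holds along every min cost flow from s to d, not only along the flow f used to define r. -/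
/-- with surge prices `r` defined from envy-free prices `p` (with nonnegative
utilities) supporting the identity assignment for a min cost flow `f` from `s` to `d`,
the best-response property of `r` holds along *every* min cost flow `f'` from `s` to `d`:
for all `x, y` with `f'(x,y) > 0`, `r_y − ℓ(x,y) ≥ r_w − ℓ(x,w)` for all `w` with `d_w > 0`,
and `r_y − ℓ(x,y) ≥ 0`. -/
theorem stmt3 {V : Type*} [Fintype V] [Nonempty V] [DecidableEq V]
    (ℓ : V → V → ℝ)
    (hl0 : ∀ u, ℓ u u = 0) (hlsymm : ∀ u v, ℓ u v = ℓ v u)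
    (hlnn : ∀ u v, 0 ≤ ℓ u v) (hltri : ∀ u v w, ℓ u w ≤ ℓ u v + ℓ v w)
    (s d : V → ℝ)
    (hs0 : ∀ v, 0 ≤ s v) (hs1 : ∑ v, s v = 1)
    (hd0 : ∀ v, 0 ≤ d v) (hd1 : ∑ v, d v = 1)
    (f : V → V → ℝ) (hf : IsMinCostFlow ℓ f s d)
    (S : Finset (V × V)) (hS : S = Finset.univ.filter fun p : V × V => 0 < f p.1 p.2)
    (C : ℝ) (hC : IsGreatest {c : ℝ | ∃ i j : V, c = 1 + ℓ i j} C)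
    (p : V × V → ℝ)
    (hEF : ∀ wz ∈ S, ∀ xy ∈ S, (C - ℓ wz.1 xy.2) - p xy ≤ (C - ℓ wz.1 wz.2) - p wz)
    (hnn : ∀ wz ∈ S, 0 ≤ (C - ℓ wz.1 wz.2) - p wz)
    (r : V → ℝ)
    (hr : ∀ xy ∈ S, r xy.2 = C - p xy)
    (hr0 : ∀ y, d y = 0 → r y = 0)
    (f' : V → V → ℝ) (hf' : IsMinCostFlow ℓ f' s d) :
    ∀ x y, 0 < f' x y →
      (∀ w, 0 < d w → r w - ℓ x w ≤ r y - ℓ x y) ∧ 0 ≤ r y - ℓ x y := by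
  obtain ⟨⟨hfnn, hfrow, hfcol⟩, hfMin⟩ := hf
  obtain ⟨⟨hf'nn, hf'row, hf'col⟩, hf'Min⟩ := hf'
  -- the set of locations with positive demand is nonempty
  set T : Finset V := Finset.univ.filter (fun w => 0 < d w) with hT
  have hTne : T.Nonempty := by
    by_contra h
    rw [Finset.not_nonempty_iff_eq_empty] at h
    have hz : ∑ v, d v = 0 := by
      apply Finset.sum_eq_zero
      intro v _
      by_contra hv
      have hv' : v ∈ T := by
        rw [hT, Finset.mem_filter]
        exact ⟨Finset.mem_univ v, lt_of_le_of_ne (hd0 v) (Ne.symm hv)⟩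
      rw [h] at hv'
      exact absurd hv' (Finset.notMem_empty v)
    rw [hd1] at hz
    norm_num at hz
  -- potential
  set π : V → ℝ := fun x => max 0 (T.sup' hTne (fun w => r w - ℓ x w)) with hπ
  have hA : ∀ x w, 0 < d w → r w - ℓ x w ≤ π x := by
    intro x w hw
    refine le_trans (Finset.le_sup' (fun w => r w - ℓ x w) ?_) (le_max_right _ _)
    rw [hT, Finset.mem_filter]
    exact ⟨Finset.mem_univ w, hw⟩
  have hB : ∀ x, 0 ≤ π x := fun x => le_max_left _ _
  -- positive entries of a flow lie in columns with positive demand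
  have hdpos : ∀ (g : V → V → ℝ), (∀ u v, 0 ≤ g u v) → (∀ v, ∑ u, g u v = d v) →
      ∀ x y, 0 < g x y → 0 < d y := by
    intro g hg hgc x y hxy
    have h1 : g x y ≤ ∑ u, g u y :=
      Finset.single_le_sum (fun u _ => hg u y) (Finset.mem_univ x)
    rw [hgc] at h1; linarith
  -- every column with positive demand appears in S
  have hScol : ∀ w, 0 < d w → ∃ u, (u, w) ∈ S := by
    intro w hw
    by_contra h
    push_neg at h
    have hz : ∑ u, f u w = 0 := by
      apply Finset.sum_eq_zero
      intro u _
      have hu := h u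
      rw [hS, Finset.mem_filter] at hu
      push_neg at hu
      have := hu (Finset.mem_univ _)
      linarith [hfnn u w]
    rw [hfcol] at hz
    linarith
  -- along the support of f, the potential is attained
  have hC2 : ∀ xy ∈ S, r xy.2 - ℓ xy.1 xy.2 = π xy.1 := by
    intro xy hxy
    have hfxy : 0 < f xy.1 xy.2 := by
      rw [hS, Finset.mem_filter] at hxy; exact hxy.2
    have hdy : 0 < d xy.2 := hdpos f hfnn hfcol xy.1 xy.2 hfxy
    refine le_antisymm (hA _ _ hdy) ?_
    have hry := hr xy hxy
    show max 0 (T.sup' hTne (fun w => r w - ℓ xy.1 w)) ≤ r xy.2 - ℓ xy.1 xy.2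
    apply max_le
    · have := hnn xy hxy
      linarith
    · apply Finset.sup'_le
      intro w hw
      rw [hT, Finset.mem_filter] at hw
      obtain ⟨u, huw⟩ := hScol w hw.2
      have hEFi := hEF xy hxy (u, w) huw
      have hrw := hr (u, w) huw
      simp only at hEFi hrw
      linarith
  -- gap formula
  have gap : ∀ g : V → V → ℝ, (∀ u, ∑ v, g u v = s u) → (∀ v, ∑ u, g u v = d v) →
      flowCost ℓ g = (∑ u, ∑ v, g u v * (ℓ u v + π u - r v))
        + (∑ v, d v * r v) - (∑ u, s u * π u) := by
    intro g hgr hgc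
    have e1 : ∑ u, ∑ v, g u v * π u = ∑ u, s u * π u := by
      refine Finset.sum_congr rfl fun u _ => ?_
      rw [← Finset.sum_mul, hgr]
    have e2 : ∑ u, ∑ v, g u v * r v = ∑ v, d v * r v := by
      rw [Finset.sum_comm]
      refine Finset.sum_congr rfl fun v _ => ?_
      rw [← Finset.sum_mul, hgc]
    have e3 : ∑ u, ∑ v, g u v * (ℓ u v + π u - r v)
        = (∑ u, ∑ v, g u v * ℓ u v) + (∑ u, ∑ v, g u v * π u)
          - (∑ u, ∑ v, g u v * r v) := by
      simp only [mul_add, mul_sub, Finset.sum_add_distrib, Finset.sum_sub_distrib]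
    rw [e3, e1, e2]
    unfold flowCost
    ring
  -- the gap term vanishes for f
  have hfgap : ∑ u, ∑ v, f u v * (ℓ u v + π u - r v) = 0 := by
    apply Finset.sum_eq_zero
    intro u _
    apply Finset.sum_eq_zero
    intro v _
    rcases eq_or_lt_of_le (hfnn u v) with h | h
    · rw [← h, zero_mul]
    · have hmem : (u, v) ∈ S := by
        rw [hS, Finset.mem_filter]; exact ⟨Finset.mem_univ _, h⟩
      have := hC2 (u, v) hmem
      simp only at this
      have : ℓ u v + π u - r v = 0 := by linarith
      rw [this, mul_zero]
  -- nonnegativity of gap terms for f'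
  have hterm_nn : ∀ u v, 0 ≤ f' u v * (ℓ u v + π u - r v) := by
    intro u v
    rcases eq_or_lt_of_le (hf'nn u v) with h | h
    · rw [← h, zero_mul]
    · have hdv : 0 < d v := hdpos f' hf'nn hf'col u v h
      have := hA u v hdv
      have hfac : 0 ≤ ℓ u v + π u - r v := by linarith
      exact mul_nonneg (le_of_lt h) hfac
  -- costs are equal
  have hcost : flowCost ℓ f' = flowCost ℓ f :=
    le_antisymm (hfMin f' ⟨hf'nn, hf'row, hf'col⟩ |> fun h => le_antisymm (hf'Min f ⟨hfnn, hfrow, hfcol⟩) h |> Eq.le)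
      (hfMin f' ⟨hf'nn, hf'row, hf'col⟩)
  -- the gap term vanishes for f'
  have hf'gap : ∑ u, ∑ v, f' u v * (ℓ u v + π u - r v) = 0 := by
    have g1 := gap f hfrow hfcol
    have g2 := gap f' hf'row hf'col
    rw [hfgap] at g1
    rw [hcost, g1] at g2
    linarith
  -- each term is zero
  have hzero : ∀ x y, f' x y * (ℓ x y + π x - r y) = 0 := by
    intro x y
    have h1 : ∀ u ∈ Finset.univ, (0:ℝ) ≤ ∑ v, f' u v * (ℓ u v + π u - r v) :=
      fun u _ => Finset.sum_nonneg fun v _ => hterm_nn u v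
    have h2 := (Finset.sum_eq_zero_iff_of_nonneg h1).mp hf'gap x (Finset.mem_univ x)
    have h3 : ∀ v ∈ Finset.univ, (0:ℝ) ≤ f' x v * (ℓ x v + π x - r v) :=
      fun v _ => hterm_nn x v
    exact (Finset.sum_eq_zero_iff_of_nonneg h3).mp h2 y (Finset.mem_univ y)
  intro x y hxy
  have hfac : ℓ x y + π x - r y = 0 := by
    have := hzero x y
    rcases mul_eq_zero.mp this with h | h
    · exact absurd h (ne_of_gt hxy)
    · exact h
  have hmain : r y - ℓ x y = π x := by linarith
  constructor
  · intro w hw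
    have := hA x w hw
    linarith
  · have := hB x
    linarith
end

section
/- Let s be a supply vector, d a demand vector, and α a target supply vector such that for every i ∈ V, α_i > 0 implies d_i > 0. Then there exist surge prices r̄ : V → ℝ with r̄_v ≥ 0 for all v, and a min cost flow f from s to α, such that for every u, v with f(u,v) > 0, μ(u→v | α, r̄, d) = max_{w∈V} μ(u→w | α, r̄, d). That is, there exist surge prices for which some passenger-taxicab equilibrium induces the target supply α. -/
/-!
The support of a min cost flow `f` is `ℓ`-cyclically monotone: pushing a little flow around a cycle
of the support yields another flow, whose cost cannot be lower. Rockafellar's construction then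
gives values `b` with `b w - ℓ u w ≤ b v - ℓ u v` whenever `0 < f u v`, i.e. every move of `f`
maximizes `b - ℓ u`. Shift `b` to be nonnegative and choose `r v` so that the revenue
`r v * min 1 (d v / α v)` equals `b v` wherever `0 < α v` (possible since then `0 < d v`);
where `α v = 0` the revenue is `0 ≤ b v` whatever `r v` is.
-/

open Finset Filter Topology

section CyclicalMonotonicity

variable {X Y : Type*} (c : X → Y → ℝ)

/-- `chainCost c [(xₖ, yₖ), …, (x₁, y₁)] y = ∑ᵢ (c xᵢ yᵢ₊₁ - c xᵢ yᵢ)` with `yₖ₊₁ = y`: the change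
in cost when each `xᵢ` is redirected from `yᵢ` to `yᵢ₊₁`. The most recent pair is the head. -/
def chainCost : List (X × Y) → Y → ℝ
  | [], _ => 0
  | (x, y) :: l, y' => chainCost l y + (c x y' - c x y)

/-- The usual `c`-cyclical monotonicity `∑ᵢ c xᵢ yᵢ ≤ ∑ᵢ c xᵢ yᵢ₊₁` over cycles in `P`: a cycle is
a chain closed at the target `q.2` of its earliest pair `q`, the last entry of the list. -/
def IsCyclicallyMonotone (P : Set (X × Y)) : Prop :=
  ∀ l q, (∀ p ∈ l, p ∈ P) → q ∈ P → 0 ≤ chainCost c (l ++ [q]) q.2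

variable {c} {P : Set (X × Y)}

lemma IsCyclicallyMonotone.exists_le_chainCost_cons (h : IsCyclicallyMonotone c P)
    {l : List (X × Y)} {x : X} {y : Y} (hl : ∀ p ∈ l, p ∈ P) (hxy : (x, y) ∈ P) (y' : Y) :
    ∃ q ∈ P, c x y' - c x q.2 ≤ chainCost c ((x, y) :: l) y' := by
  rcases l.eq_nil_or_concat' with rfl | ⟨l, q, rfl⟩
  · exact ⟨(x, y), hxy, by simp [chainCost]⟩
  · obtain ⟨hl, hq⟩ := List.forall_mem_append.1 hl
    have hcycle := h ((x, y) :: l) q (List.forall_mem_cons.2 ⟨hxy, hl⟩) (hq q (by simp))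
    simp only [List.cons_append, chainCost] at hcycle ⊢
    exact ⟨q, hq q (by simp), by linarith⟩

lemma IsCyclicallyMonotone.bddBelow_chainCost (h : IsCyclicallyMonotone c P) (hP : P.Finite)
    (y' : Y) :
    BddBelow (Set.range fun l : {l : List (X × Y) // ∀ p ∈ l, p ∈ P} => chainCost c l y') := by
  obtain ⟨m, hm⟩ := ((hP.prod hP).image fun q : (X × Y) × (X × Y) =>
    c q.1.1 y' - c q.1.1 q.2.2).bddBelow
  refine ⟨min m 0, ?_⟩
  rintro _ ⟨⟨_ | ⟨⟨x, y⟩, l⟩, hl⟩, rfl⟩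
  · simp [chainCost]
  · obtain ⟨hxy, hl⟩ := List.forall_mem_cons.1 hl
    obtain ⟨q, hq, hle⟩ := h.exists_le_chainCost_cons hl hxy y'
    exact (min_le_left _ _).trans <| (hm ⟨((x, y), q), ⟨hxy, hq⟩, rfl⟩).trans hle

/-- Rockafellar's construction: `b y` is the least cost of a chain in `P` ending at `y`. -/
theorem IsCyclicallyMonotone.exists_potential (h : IsCyclicallyMonotone c P) (hP : P.Finite) :
    ∃ b : Y → ℝ, ∀ q ∈ P, ∀ y, b y - c q.1 y ≤ b q.2 - c q.1 q.2 := by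
  set b : Y → ℝ := fun y => ⨅ l : {l : List (X × Y) // ∀ p ∈ l, p ∈ P}, chainCost c l y
  refine ⟨b, ?_⟩
  rintro ⟨x, y⟩ hxy y'
  have : Nonempty {l : List (X × Y) // ∀ p ∈ l, p ∈ P} := ⟨⟨[], by simp⟩⟩
  have hstep : ∀ l : {l : List (X × Y) // ∀ p ∈ l, p ∈ P},
      b y' - (c x y' - c x y) ≤ chainCost c l y := fun ⟨l, hl⟩ => by
    have := ciInf_le (h.bddBelow_chainCost hP y') ⟨(x, y) :: l, List.forall_mem_cons.2 ⟨hxy, hl⟩⟩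
    simp only [chainCost] at this
    linarith
  linarith [le_ciInf hstep]

end CyclicalMonotonicity

section Flows

variable {V : Type*} [Fintype V]

lemma IsFlow.target_pos_of_pos {f : V → V → ℝ} {s s' : V → ℝ} (hf : IsFlow f s s') {u v : V}
    (huv : 0 < f u v) : 0 < s' v :=
  hf.2.2 v ▸ huv.trans_le (single_le_sum (fun w _ => hf.1 w v) (mem_univ u))

lemma IsFlow.add_smul {f Δ : V → V → ℝ} {s s' : V → ℝ} (hf : IsFlow f s s') {t : ℝ}
    (hrow : ∀ u, ∑ v, Δ u v = 0) (hcol : ∀ v, ∑ u, Δ u v = 0)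
    (hnonneg : ∀ u v, 0 ≤ f u v + t * Δ u v) : IsFlow (f + t • Δ) s s' := by
  refine ⟨hnonneg, fun u => ?_, fun v => ?_⟩
  · simp [sum_add_distrib, ← mul_sum, hrow, hf.2.1]
  · simp [sum_add_distrib, ← mul_sum, hcol, hf.2.2]

lemma flowCost_add_smul (ℓ f Δ : V → V → ℝ) (t : ℝ) :
    flowCost ℓ (f + t • Δ) = flowCost ℓ f + t * flowCost ℓ Δ := by
  simp [flowCost, add_mul, sum_add_distrib, mul_sum, mul_assoc]

end Flows

section ChainFlow

variable {V : Type*} [DecidableEq V]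

def chainFlow : List (V × V) → V → V → V → ℝ
  | [], _ => 0
  | (x, y) :: l, y' => chainFlow l y + Pi.single x (Pi.single y' 1 - Pi.single y 1)

lemma neg_count_le_chainFlow (l : List (V × V)) (y u v : V) :
    -(l.count (u, v) : ℝ) ≤ chainFlow l y u v := by
  induction l generalizing y with
  | nil => simp [chainFlow]
  | cons p l ih =>
    obtain ⟨x, y₀⟩ := p
    have hstep : -(if (x, y₀) = (u, v) then (1 : ℝ) else 0)
        ≤ (Pi.single x (Pi.single y 1 - Pi.single y₀ 1) : V → V → ℝ) u v := by
      clear ih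
      rcases eq_or_ne u x with rfl | hx
      · simp only [Pi.single_eq_same, Pi.sub_apply, Pi.single_apply, Prod.mk.injEq, true_and]
        split_ifs <;> simp_all
      · simp [hx, hx.symm]
    rw [List.count_cons, chainFlow, Pi.add_apply, Pi.add_apply]
    push_cast [beq_iff_eq]
    linarith [ih y₀]

variable [Fintype V]

lemma sum_chainFlow_row (l : List (V × V)) (y u : V) : ∑ v, chainFlow l y u v = 0 := by
  induction l generalizing y with
  | nil => simp [chainFlow]
  | cons p l ih =>
    rw [chainFlow, Pi.add_apply]
    by_cases hu : u = p.1
    · subst hu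
      simp [sum_add_distrib, ih, sum_sub_distrib]
    · simp [ih, hu]

lemma sum_chainFlow_append_singleton_col (l : List (V × V)) (q : V × V) (y v : V) :
    ∑ u, chainFlow (l ++ [q]) y u v = (Pi.single y 1 - Pi.single q.2 1 : V → ℝ) v := by
  induction l generalizing y with
  | nil => simp [chainFlow, Pi.single_apply, ite_apply]
  | cons p l ih =>
    simp only [List.cons_append, chainFlow, Pi.add_apply, sum_add_distrib, ih]
    simp [Pi.single_apply, ite_apply]

lemma flowCost_chainFlow (ℓ : V → V → ℝ) (l : List (V × V)) (y : V) :
    flowCost ℓ (chainFlow l y) = chainCost ℓ l y := by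
  induction l generalizing y with
  | nil => simp [chainFlow, chainCost, flowCost]
  | cons p l ih =>
    rw [chainFlow, chainCost, ← ih]
    simp [flowCost, add_mul, sum_add_distrib, Pi.single_apply, ite_apply, sub_mul]

end ChainFlow

theorem IsMinCostFlow.isCyclicallyMonotone {V : Type*} [Fintype V] {ℓ f : V → V → ℝ}
    {s s' : V → ℝ} (hf : IsMinCostFlow ℓ f s s') :
    IsCyclicallyMonotone ℓ {q | 0 < f q.1 q.2} := by
  classical
  intro l q hl hq
  set L := l ++ [q]
  have hL : ∀ p ∈ L, 0 < f p.1 p.2 := List.forall_mem_append.2 ⟨hl, by simpa using hq⟩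
  have hsmall : ∀ᶠ ε in 𝓝[>] (0 : ℝ), ∀ p ∈ L, ε * L.length ≤ f p.1 p.2 := by
    refine ((eventually_all_finite L.finite_toSet).2 fun p hp => ?_).filter_mono
      nhdsWithin_le_nhds
    have : Tendsto (fun ε : ℝ => ε * L.length) (𝓝 0) (𝓝 0) := by
      simpa using (continuous_mul_const (L.length : ℝ)).tendsto 0
    exact this.eventually (eventually_le_nhds (hL p hp))
  obtain ⟨ε, hεL, hε⟩ := (hsmall.and self_mem_nhdsWithin).exists
  -- Pushing `ε` around the cycle `L` keeps a flow, and changes the cost by `ε * chainCost`.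
  have hflow : IsFlow (f + ε • chainFlow L q.2) s s' := by
    refine hf.1.add_smul (sum_chainFlow_row L q.2) (fun v => ?_) (fun u v => ?_)
    · simp [L, sum_chainFlow_append_singleton_col]
    · have hcount := neg_count_le_chainFlow L q.2 u v
      by_cases huv : (u, v) ∈ L
      · have : (L.count (u, v) : ℝ) ≤ L.length := by exact_mod_cast List.count_le_length
        nlinarith [hεL _ huv]
      · rw [List.count_eq_zero_of_not_mem huv, Nat.cast_zero, neg_zero] at hcount
        nlinarith [hf.1.1 u v]
  have hcost := hf.2 _ hflow
  rw [flowCost_add_smul, flowCost_chainFlow] at hcost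
  exact nonneg_of_mul_nonneg_right (by linarith) hε

theorem exists_isMinCostFlow {V : Type*} [Fintype V] (ℓ : V → V → ℝ) {s s' : V → ℝ}
    (hs : ∀ u, 0 ≤ s u) (hs' : ∀ v, 0 ≤ s' v) (hs1 : ∑ u, s u = 1) (hs'1 : ∑ v, s' v = 1) :
    ∃ f, IsMinCostFlow ℓ f s s' := by
  have hne : {f | IsFlow f s s'}.Nonempty :=
    ⟨fun u v => s u * s' v, fun u v => mul_nonneg (hs u) (hs' v),
      fun u => by rw [← mul_sum, hs'1, mul_one], fun v => by rw [← sum_mul, hs1, one_mul]⟩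
  have hclosed : IsClosed {f : V → V → ℝ | IsFlow f s s'} := by
    simp only [IsFlow, Set.ofPred_and, Set.ofPred_forall]
    refine (isClosed_iInter fun u => isClosed_iInter fun v => ?_).inter
      ((isClosed_iInter fun u => ?_).inter (isClosed_iInter fun v => ?_))
    · exact isClosed_le continuous_const (by fun_prop)
    · exact isClosed_eq (by fun_prop) continuous_const
    · exact isClosed_eq (by fun_prop) continuous_const
  have hbounded : {f | IsFlow f s s'} ⊆ Set.Icc 0 fun u _ => s u := fun f hf =>
    ⟨fun u v => hf.1 u v,
      fun u v => (single_le_sum (fun w _ => hf.1 u w) (mem_univ v)).trans_eq (hf.2.1 u)⟩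
  have hcont : Continuous (flowCost ℓ) := by unfold flowCost; fun_prop
  obtain ⟨f, hf, hmin⟩ := (isCompact_Icc.of_isClosed_subset hclosed hbounded).exists_isMinOn hne
    hcont.continuousOn
  exact ⟨f, hf, fun g hg => hmin hg⟩

noncomputable def equilibriumPrice {V : Type*} (α d p : V → ℝ) (v : V) : ℝ :=
  if 0 < α v then p v / min 1 (d v / α v) else 0

section EquilibriumPrice

variable {V : Type*} {ℓ : V → V → ℝ} {α d p : V → ℝ}

lemma equilibriumPrice_nonneg (hp : ∀ v, 0 ≤ p v) (hαd : ∀ v, 0 < α v → 0 < d v) (v : V) :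
    0 ≤ equilibriumPrice α d p v := by
  unfold equilibriumPrice
  split_ifs with hv
  · exact div_nonneg (hp v) (le_min zero_le_one (div_pos (hαd v hv) hv).le)
  · exact le_rfl

lemma util_equilibriumPrice_of_pos {v : V} (hv : 0 < α v) (hdv : 0 < d v) (u : V) :
    util ℓ α (equilibriumPrice α d p) d u v = p v - ℓ u v := by
  rw [util, equilibriumPrice, if_pos hv, div_mul_cancel₀ _ (lt_min one_pos (div_pos hdv hv)).ne']

lemma util_equilibriumPrice_le {v : V} (hv : 0 ≤ p v) (u : V) :
    util ℓ α (equilibriumPrice α d p) d u v ≤ p v - ℓ u v := by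
  rw [util, equilibriumPrice, sub_le_sub_iff_right]
  split_ifs
  · rcases eq_or_ne (min 1 (d v / α v)) 0 with h | h
    · simpa [h] using hv
    · rw [div_mul_cancel₀ _ h]
  · simpa using hv

end EquilibriumPrice

theorem stmt6_general {V : Type*} [Fintype V]
    (ℓ : V → V → ℝ)
    (s d α : V → ℝ)
    (hs0 : ∀ v, 0 ≤ s v) (hs1 : ∑ v, s v = 1)
    (hα0 : ∀ v, 0 ≤ α v) (hα1 : ∑ v, α v = 1)
    (hαd : ∀ i, 0 < α i → 0 < d i) :
    ∃ r : V → ℝ, (∀ v, 0 ≤ r v) ∧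
      ∃ f, IsMinCostFlow ℓ f s α ∧
        ∀ u v, 0 < f u v →
          IsGreatest (Set.range fun w => util ℓ α r d u w) (util ℓ α r d u v) := by
  obtain ⟨f, hf⟩ := exists_isMinCostFlow ℓ hs0 hα0 hs1 hα1
  obtain ⟨b, hb⟩ := hf.isCyclicallyMonotone.exists_potential (Set.toFinite _)
  set p : V → ℝ := fun v => b v + ∑ w, |b w|
  have hp : ∀ v, 0 ≤ p v := fun v => by
    have := single_le_sum (fun w _ => abs_nonneg (b w)) (mem_univ v)
    linarith [neg_abs_le (b v)]
  refine ⟨equilibriumPrice α d p, equilibriumPrice_nonneg hp hαd, f, hf, fun u v huv => ?_⟩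
  have hαv := hf.1.target_pos_of_pos huv
  refine ⟨⟨v, rfl⟩, ?_⟩
  rintro _ ⟨w, rfl⟩
  calc util ℓ α (equilibriumPrice α d p) d u w ≤ p w - ℓ u w := util_equilibriumPrice_le (hp w) u
    _ ≤ p v - ℓ u v := by linarith [hb (u, v) huv w]
    _ = util ℓ α (equilibriumPrice α d p) d u v :=
      (util_equilibriumPrice_of_pos hαv (hαd v hαv) u).symm

/-- Theorem `thm:anyst`: given supply `s`, demand `d` and a target supply `α`
with `α_i > 0 → d_i > 0`, there exist nonnegative surge prices `r̄` and a min cost flow `f`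
from `s` to `α` along which every move with positive flow achieves the maximum taxicab
utility `μ(u → · | α, r̄, d)`; i.e., some passenger-taxicab equilibrium induces supply `α`. -/
theorem stmt6 {V : Type*} [Fintype V] [Nonempty V] [DecidableEq V]
    (ℓ : V → V → ℝ)
    (hl0 : ∀ u, ℓ u u = 0) (hlsymm : ∀ u v, ℓ u v = ℓ v u)
    (hlnn : ∀ u v, 0 ≤ ℓ u v) (hltri : ∀ u v w, ℓ u w ≤ ℓ u v + ℓ v w)
    (s d α : V → ℝ)
    (hs0 : ∀ v, 0 ≤ s v) (hs1 : ∑ v, s v = 1)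
    (hd0 : ∀ v, 0 ≤ d v) (hd1 : ∑ v, d v = 1)
    (hα0 : ∀ v, 0 ≤ α v) (hα1 : ∑ v, α v = 1)
    (hαd : ∀ i, 0 < α i → 0 < d i) :
    ∃ r : V → ℝ, (∀ v, 0 ≤ r v) ∧
      ∃ f, IsMinCostFlow ℓ f s α ∧
        ∀ u v, 0 < f u v →
          IsGreatest (Set.range fun w => util ℓ α r d u w) (util ℓ α r d u v) :=
  stmt6_general ℓ s d α hs0 hs1 hα0 hα1 hαd
end

section
/- Let μ be a welfare-maximizing matching of passengers to taxicabs. Define the integral flow f* : V × V → ℕ by f*(u,v) = |{b ∈ B : loc(b) = v, μ(b) ≠ ∅, loc(μ(b)) = u}| for u ≠ v, and f*(u,u) = |{b ∈ B : loc(b) = u, μ(b) ≠ ∅, loc(μ(b)) = u}| + |{t ∈ T : loc(t) = u and t is not in the image of μ}|. Then for every function g : V × V → ℕ with Σ_v g(u,v) = Σ_v f*(u,v) for all u and Σ_u g(u,v) = Σ_u f*(u,v) for all v, we have Σ_{u,v} g(u,v)·ℓ(u,v) ≥ Σ_{u,v} f*(u,v)·ℓ(u,v); that is, f* is a min cost integral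 flow between its own marginals. -/
/-- A matching of passengers to taxicabs: injective on the set of matched passengers. -/
def IsMatching {B T : Type*} (μ : B → Option T) : Prop :=
  ∀ b₁ b₂ t, μ b₁ = some t → μ b₂ = some t → b₁ = b₂

/-- The welfare of a matching: the sum over matched passengers of value minus distance. -/
noncomputable def welfare {V B T : Type*} [Fintype B] (ℓ : V → V → ℝ)
    (locB : B → V) (locT : T → V) (val : B → ℝ) (μ : B → Option T) : ℝ :=
  ∑ b, (μ b).elim 0 (fun t => val b - ℓ (locB b) (locT t))

open Finset

set_option linter.unusedSectionVars false

lemma sum_dite_subtype {α M : Type*} [Fintype α] [AddCommMonoid M] (p : α → Prop)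
    [DecidablePred p] (f : ∀ a, p a → M) :
    ∑ a, (if h : p a then f a h else 0) = ∑ a : {x // p x}, f a.1 a.2 := by
  classical
  have h1 : ∀ a : {x // p x}, f a.1 a.2 = (if h : p a.1 then f a.1 h else 0) := by
    intro a; rw [dif_pos a.2]
  rw [Finset.sum_congr rfl (fun a _ => h1 a)]
  rw [← Finset.sum_subtype (Finset.univ.filter p) (by simp) (fun a => if h : p a then f a h else 0)]
  refine (Finset.sum_subset (Finset.filter_subset _ _) ?_).symm
  intro x _ hx
  simp only [Finset.mem_filter, Finset.mem_univ, true_and] at hx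
  rw [dif_neg hx]

lemma sum_subtype_ite {α M : Type*} [Fintype α] [AddCommMonoid M] (p : α → Prop)
    [DecidablePred p] (f : α → M) :
    ∑ x : {a // p a}, f x.1 = ∑ a, if p a then f a else 0 := by
  rw [← Finset.sum_subtype (Finset.univ.filter p) (by simp) f, Finset.sum_filter]

lemma ncard_setOf_eq_sum {α : Type*} [Fintype α] (p : α → Prop) [DecidablePred p] :
    {x | p x}.ncard = ∑ x, if p x then 1 else 0 := by
  rw [Set.ncard_eq_toFinset_card', Set.toFinset_setOf, Finset.card_filter]

lemma assign_exists {V T D : Type*} [Fintype V] [DecidableEq V] [Fintype T] [Fintype D]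
    (g : V → V → ℕ) (locT : T → V) (locD : D → V)
    (hT : ∀ u, Fintype.card {t // locT t = u} = ∑ v, g u v)
    (hD : ∀ v, Fintype.card {d // locD d = v} = ∑ u, g u v) :
    ∃ F : D → T, Function.Injective F ∧
      ∀ M : V → V → ℝ, ∑ d, M (locD d) (locT (F d)) = ∑ v, ∑ u, (g u v : ℝ) * M v u := by
  classical
  have cT : ∀ u, Fintype.card (Σ v, Fin (g u v)) = Fintype.card {t // locT t = u} := by
    intro u; simp [hT u]
  have cD : ∀ v, Fintype.card {d // locD d = v} = Fintype.card (Σ u, Fin (g u v)) := by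
    intro v; simp [hD v]
  let eT : ∀ u, (Σ v, Fin (g u v)) ≃ {t // locT t = u} := fun u => Fintype.equivOfCardEq (cT u)
  let eD : ∀ v, {d // locD d = v} ≃ (Σ u, Fin (g u v)) := fun v => Fintype.equivOfCardEq (cD v)
  let Ψ : (Σ u, Σ v, Fin (g u v)) → T := fun y => (eT y.1 y.2).val
  have hlocT : ∀ y, locT (Ψ y) = y.1 := fun y => (eT y.1 y.2).2
  have hΨinj : Function.Injective Ψ := by
    rintro ⟨u, s⟩ ⟨u', s'⟩ h
    have hu : u = u' := by
      have h1 := hlocT ⟨u, s⟩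
      have h2 := hlocT ⟨u', s'⟩
      simp only at h1 h2
      rw [← h1, ← h2]
      exact congrArg locT h
    subst hu
    have : s = s' := (eT u).injective (Subtype.ext h)
    rw [this]
  let θ : ∀ v, (Σ u, Fin (g u v)) → (Σ u, Σ w, Fin (g u w)) := fun v s => ⟨s.1, v, s.2⟩
  have hθinj : ∀ v, Function.Injective (θ v) := by
    intro v
    rintro ⟨u, i⟩ ⟨u', i'⟩ h
    have hu : u = u' := congrArg Sigma.fst h
    subst hu
    simp only [θ, Sigma.mk.inj_iff, heq_eq_eq, true_and] at h
    rw [h]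
  let F' : (Σ v, {d // locD d = v}) → T := fun x => Ψ (θ x.1 (eD x.1 x.2))
  have hlocF' : ∀ x, locT (F' x) = (eD x.1 x.2).1 := fun x => hlocT _
  have hF'inj : Function.Injective F' := by
    rintro ⟨v, d⟩ ⟨v', d'⟩ h
    have h2 := hΨinj h
    have hv : v = v' := congrArg (fun y => y.2.1) h2
    subst hv
    have h3 : eD v d = eD v d' := hθinj v h2
    have : d = d' := (eD v).injective h3
    rw [this]
  refine ⟨F' ∘ (Equiv.sigmaFiberEquiv locD).symm, hF'inj.comp (Equiv.injective _), ?_⟩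
  intro M
  calc ∑ d, M (locD d) (locT ((F' ∘ (Equiv.sigmaFiberEquiv locD).symm) d))
      = ∑ x : Σ v, {d // locD d = v}, M (locD ((Equiv.sigmaFiberEquiv locD) x))
          (locT ((F' ∘ (Equiv.sigmaFiberEquiv locD).symm) ((Equiv.sigmaFiberEquiv locD) x))) :=
        (Equiv.sum_comp (Equiv.sigmaFiberEquiv locD)
          (fun d => M (locD d) (locT ((F' ∘ (Equiv.sigmaFiberEquiv locD).symm) d)))).symm
    _ = ∑ x : Σ v, {d // locD d = v}, M x.1 (eD x.1 x.2).1 := by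
        refine Finset.sum_congr rfl (fun x _ => ?_)
        rcases x with ⟨v, d⟩
        have h1 : locD ((Equiv.sigmaFiberEquiv locD) ⟨v, d⟩) = v := d.2
        rw [h1, Function.comp_apply, Equiv.symm_apply_apply, hlocF' ⟨v, d⟩]
    _ = ∑ v, ∑ d : {d // locD d = v}, M v (eD v d).1 := by
        rw [← Finset.univ_sigma_univ, Finset.sum_sigma]
    _ = ∑ v, ∑ s : Σ u, Fin (g u v), M v s.1 := by
        refine Finset.sum_congr rfl (fun v _ => ?_)
        exact Equiv.sum_comp (eD v) (fun s => M v s.1)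
    _ = ∑ v, ∑ u, (g u v : ℝ) * M v u := by
        refine Finset.sum_congr rfl (fun v _ => ?_)
        rw [← Finset.univ_sigma_univ, Finset.sum_sigma]
        simp [mul_comm]

section Aux
variable {B T V : Type*} [Fintype B] [Fintype T] [Fintype V] [DecidableEq V]
variable (μ : B → Option T) (locB : B → V) (locT : T → V)

/-- matched at u -/
def mAt (u : V) (b : B) : Prop := ∃ t, μ b = some t ∧ locT t = u

/-- idle taxi -/
def idleT (t : T) : Prop := ∀ b, μ b ≠ some t

open Classical in
lemma hcol_b (v : V) (b : B) :
    (∑ u, if locB b = v ∧ mAt μ locT u b then 1 else 0) =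
      (if locB b = v ∧ (μ b).isSome then 1 else 0 : ℕ) := by
  classical
  by_cases hs : (μ b).isSome
  · obtain ⟨t, hb⟩ := Option.isSome_iff_exists.mp hs
    have hiff : ∀ u, (locB b = v ∧ mAt μ locT u b) ↔ (locB b = v ∧ locT t = u) := by
      intro u
      unfold mAt
      rw [hb]
      simp
    rw [Finset.sum_congr rfl (fun u _ => if_congr (hiff u) rfl rfl)]
    by_cases hbv : locB b = v
    · simp [hbv, hs]
    · simp [hbv]
  · have hno : ∀ u, ¬ mAt μ locT u b := by
      intro u ⟨t, hb, _⟩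
      exact hs (by rw [hb]; rfl)
    rw [if_neg (fun hc => hs hc.2)]
    exact Finset.sum_eq_zero (fun u _ => if_neg (fun hc => hno u hc.2))

open Classical in
lemma hrow_b (u : V) (b : B) :
    (∑ v, if locB b = v ∧ mAt μ locT u b then 1 else 0) =
      (if mAt μ locT u b then 1 else 0 : ℕ) := by
  classical
  by_cases hm : mAt μ locT u b
  · simp [hm]
  · simp [hm]

open Classical in
lemma hcnt (hμ : IsMatching μ) (t : T) :
    (∑ b, if μ b = some t then 1 else 0) = (if ¬ idleT μ t then 1 else 0 : ℕ) := by
  classical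
  by_cases h : idleT μ t
  · rw [if_neg (not_not_intro h)]
    exact Finset.sum_eq_zero (fun b _ => if_neg (h b))
  · rw [if_pos h]
    obtain ⟨b₀, hb₀⟩ := not_forall.mp h
    have hb₀' : μ b₀ = some t := not_not.mp hb₀
    rw [← Finset.card_filter]
    have : Finset.univ.filter (fun b => μ b = some t) = {b₀} := by
      ext b
      simp only [Finset.mem_filter, Finset.mem_univ, true_and, Finset.mem_singleton]
      exact ⟨fun hb => hμ b b₀ t hb hb₀', fun h => h ▸ hb₀'⟩
    rw [this, Finset.card_singleton]

open Classical in
lemma hmt (u : V) (b : B) :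
    (if mAt μ locT u b then 1 else 0 : ℕ) =
      ∑ t, if μ b = some t ∧ locT t = u then 1 else 0 := by
  classical
  by_cases hs : (μ b).isSome
  · obtain ⟨t₀, hb⟩ := Option.isSome_iff_exists.mp hs
    have hiff : ∀ t, (μ b = some t ∧ locT t = u) ↔ (t = t₀ ∧ locT t₀ = u) := by
      intro t
      rw [hb]
      constructor
      · rintro ⟨h1, h2⟩
        obtain rfl := (Option.some_inj.mp h1).symm
        exact ⟨rfl, h2⟩
      · rintro ⟨rfl, h2⟩
        exact ⟨rfl, h2⟩
    rw [Finset.sum_congr rfl (fun t _ => if_congr (hiff t) rfl rfl)]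
    have hm : mAt μ locT u b ↔ locT t₀ = u := by
      unfold mAt
      rw [hb]
      simp
    by_cases h2 : locT t₀ = u
    · rw [if_pos (hm.mpr h2)]
      simp [h2]
    · rw [if_neg (fun hc => h2 (hm.mp hc))]
      simp [h2]
  · have hno : ¬ mAt μ locT u b := by
      intro ⟨t, hb, _⟩
      exact hs (by rw [hb]; rfl)
    rw [if_neg hno]
    refine (Finset.sum_eq_zero (fun t _ => if_neg (fun hc => hs (by rw [hc.1]; rfl)))).symm

end Aux

/-- let `μ` be a welfare-maximizing matching, and let `f*` be the induced
integral flow (`f*(u,v)` counts passengers at `v` served by taxicabs from `u`, with idle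
taxicabs staying put on the diagonal). Then `f*` is a min cost integral flow between its
own marginals: every `g : V × V → ℕ` with the same row and column sums has cost at least
that of `f*`. -/
theorem stmt7 {V B T : Type*} [Fintype V] [Nonempty V] [DecidableEq V]
    [Fintype B] [Fintype T] [Nonempty T]
    (ℓ : V → V → ℝ)
    (hl0 : ∀ u, ℓ u u = 0) (hlsymm : ∀ u v, ℓ u v = ℓ v u)
    (hlnn : ∀ u v, 0 ≤ ℓ u v) (hltri : ∀ u v w, ℓ u w ≤ ℓ u v + ℓ v w)
    (locB : B → V) (locT : T → V) (val : B → ℝ) (hval : ∀ b, 0 ≤ val b)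
    (μ : B → Option T) (hμ : IsMatching μ)
    (hmax : ∀ μ' : B → Option T, IsMatching μ' →
      welfare ℓ locB locT val μ' ≤ welfare ℓ locB locT val μ)
    (fstar : V → V → ℕ)
    (hoff : ∀ u v, u ≠ v →
      fstar u v = Set.ncard {b : B | locB b = v ∧ ∃ t, μ b = some t ∧ locT t = u})
    (hdiag : ∀ u, fstar u u =
      Set.ncard {b : B | locB b = u ∧ ∃ t, μ b = some t ∧ locT t = u} +
      Set.ncard {t : T | locT t = u ∧ ∀ b, μ b ≠ some t}) :
    ∀ g : V → V → ℕ,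
      (∀ u, ∑ v, g u v = ∑ v, fstar u v) →
      (∀ v, ∑ u, g u v = ∑ u, fstar u v) →
      ∑ u, ∑ v, (fstar u v : ℝ) * ℓ u v ≤ ∑ u, ∑ v, (g u v : ℝ) * ℓ u v := by
  classical
  intro g hg1 hg2
  -- fstar in indicator form
  have hfs : ∀ u v, fstar u v =
      (∑ b, if locB b = v ∧ mAt μ locT u b then 1 else 0) +
      (if u = v then ∑ t, (if locT t = v ∧ idleT μ t then 1 else 0) else 0) := by
    intro u v
    by_cases h : u = v
    · subst h
      rw [hdiag u, ncard_setOf_eq_sum, ncard_setOf_eq_sum, if_pos rfl]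
      exact congrArg₂ (· + ·)
        (Finset.sum_congr rfl (fun b _ => if_congr Iff.rfl rfl rfl))
        (Finset.sum_congr rfl (fun t _ => if_congr Iff.rfl rfl rfl))
    · rw [hoff u v h, ncard_setOf_eq_sum, if_neg h, add_zero]
      exact Finset.sum_congr rfl (fun b _ => if_congr Iff.rfl rfl rfl)
  -- row sums: taxis at u
  have hcardT : ∀ u, Fintype.card {t // locT t = u} = ∑ v, g u v := by
    intro u
    rw [hg1 u]
    have h1 : ∑ v, fstar u v =
        (∑ b, if mAt μ locT u b then 1 else 0) +
          ∑ t, (if locT t = u ∧ idleT μ t then 1 else 0) := by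
      rw [Finset.sum_congr rfl (fun v _ => hfs u v), Finset.sum_add_distrib,
        Finset.sum_comm]
      congr 1
      · exact Finset.sum_congr rfl (fun b _ => hrow_b μ locB locT u b)
      · simp
    rw [h1]
    have h2 : (∑ b, if mAt μ locT u b then 1 else 0 : ℕ) =
        ∑ t, if locT t = u ∧ ¬ idleT μ t then 1 else 0 := by
      rw [Finset.sum_congr rfl (fun b _ => hmt μ locT u b), Finset.sum_comm]
      refine Finset.sum_congr rfl (fun t _ => ?_)
      by_cases h : locT t = u
      · have : ∀ b, (μ b = some t ∧ locT t = u) ↔ (μ b = some t) := by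
          intro b; simp [h]
        rw [Finset.sum_congr rfl (fun b _ => if_congr (this b) rfl rfl), hcnt μ hμ t]
        by_cases h' : idleT μ t
        · rw [if_neg (not_not_intro h'), if_neg (fun hc => hc.2 h')]
        · rw [if_pos h', if_pos ⟨h, h'⟩]
      · rw [if_neg (fun hc => h hc.1)]
        exact Finset.sum_eq_zero (fun b _ => if_neg (fun hc => h hc.2))
    rw [h2, ← Finset.sum_add_distrib]
    have h3 : ∀ t, ((if locT t = u ∧ ¬ idleT μ t then 1 else 0) +
        (if locT t = u ∧ idleT μ t then 1 else 0) : ℕ) = if locT t = u then 1 else 0 := by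
      intro t
      by_cases h : locT t = u
      · by_cases h' : idleT μ t
        · rw [if_neg (fun hc => hc.2 h'), if_pos ⟨h, h'⟩, if_pos h]
        · rw [if_pos ⟨h, h'⟩, if_neg (fun hc => h' hc.2), if_pos h]
      · rw [if_neg (fun hc => h hc.1), if_neg (fun hc => h hc.1), if_neg h]
    rw [Finset.sum_congr rfl (fun t _ => h3 t), Fintype.card_subtype, Finset.card_filter]
  -- the demand type
  set D := {b // (μ b).isSome} ⊕ {t // idleT μ t} with hD
  set locD : D → V := Sum.elim (fun b => locB b.1) (fun t => locT t.1) with hlocD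
  -- column sums: demands at v
  have hcardD : ∀ v, Fintype.card {d : D // locD d = v} = ∑ u, g u v := by
    intro v
    rw [hg2 v]
    have h1 : ∑ u, fstar u v =
        (∑ b, if locB b = v ∧ (μ b).isSome then 1 else 0) +
          ∑ t, (if locT t = v ∧ idleT μ t then 1 else 0) := by
      rw [Finset.sum_congr rfl (fun u _ => hfs u v), Finset.sum_add_distrib,
        Finset.sum_comm]
      congr 1
      · exact Finset.sum_congr rfl (fun b _ => hcol_b μ locB locT v b)
      · simp
    rw [h1]
    rw [Fintype.card_subtype, Finset.card_filter]
    rw [Fintype.sum_sum_type]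
    simp only [hlocD, Sum.elim_inl, Sum.elim_inr]
    congr 1
    · rw [sum_subtype_ite (fun b => (μ b).isSome) (fun b => if locB b = v then 1 else 0)]
      refine Finset.sum_congr rfl (fun b _ => ?_)
      by_cases h : (μ b).isSome <;> by_cases h2 : locB b = v <;> simp [h, h2]
    · rw [sum_subtype_ite (fun t => idleT μ t) (fun t => if locT t = v then 1 else 0)]
      refine Finset.sum_congr rfl (fun t _ => ?_)
      by_cases h : idleT μ t <;> by_cases h2 : locT t = v <;> simp [h, h2]
  -- get the assignment
  obtain ⟨F, hFinj, hFsum⟩ := assign_exists g locT locD hcardT hcardD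
  -- the new matching
  set μ' : B → Option T := fun b => if h : (μ b).isSome then some (F (Sum.inl ⟨b, h⟩)) else none
    with hμ'def
  have hμ'match : IsMatching μ' := by
    intro b₁ b₂ t h₁ h₂
    by_cases k₁ : (μ b₁).isSome
    · by_cases k₂ : (μ b₂).isSome
      · simp only [hμ'def, dif_pos k₁] at h₁
        simp only [hμ'def, dif_pos k₂] at h₂
        have : F (Sum.inl ⟨b₁, k₁⟩) = F (Sum.inl ⟨b₂, k₂⟩) := by
          rw [Option.some_inj.mp h₁, Option.some_inj.mp h₂]
        have h3 := hFinj this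
        exact congrArg Subtype.val (Sum.inl_injective h3)
      · simp only [hμ'def, dif_neg k₂] at h₂
        exact absurd h₂ (by simp)
    · simp only [hμ'def, dif_neg k₁] at h₁
      exact absurd h₁ (by simp)
  -- welfare of μ'
  have hwel' : welfare ℓ locB locT val μ' =
      (∑ b, (μ b).elim 0 (fun _ => val b)) -
        ∑ d : {b // (μ b).isSome}, ℓ (locB d.1) (locT (F (Sum.inl d))) := by
    unfold welfare
    rw [← sum_dite_subtype (fun b => (μ b).isSome)
      (fun b h => ℓ (locB b) (locT (F (Sum.inl ⟨b, h⟩))))]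
    rw [← Finset.sum_sub_distrib]
    refine Finset.sum_congr rfl (fun b _ => ?_)
    by_cases h : (μ b).isSome
    · obtain ⟨t, ht⟩ := Option.isSome_iff_exists.mp h
      simp only [hμ'def, dif_pos h, ht, Option.elim]
      simp
    · have hn : μ b = none := Option.not_isSome_iff_eq_none.mp h
      simp only [hμ'def, dif_neg h, hn, Option.elim]
      simp
  -- welfare of μ
  have hwelμ : welfare ℓ locB locT val μ =
      (∑ b, (μ b).elim 0 (fun _ => val b)) -
        ∑ b, (μ b).elim 0 (fun t => ℓ (locB b) (locT t)) := by
    unfold welfare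
    rw [← Finset.sum_sub_distrib]
    refine Finset.sum_congr rfl (fun b _ => ?_)
    cases μ b <;> simp
  -- cost of fstar equals the matched transport cost
  have hcostf : ∑ u, ∑ v, (fstar u v : ℝ) * ℓ u v =
      ∑ b, (μ b).elim 0 (fun t => ℓ (locB b) (locT t)) := by
    have step1 : ∀ u v, (fstar u v : ℝ) * ℓ u v =
        ∑ b, (if locB b = v ∧ mAt μ locT u b then ℓ u v else 0) := by
      intro u v
      by_cases h : u = v
      · subst h
        rw [hl0, mul_zero]
        refine (Finset.sum_eq_zero (fun b _ => ?_)).symm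
        simp
      · rw [hfs u v, if_neg h, add_zero]
        push_cast
        rw [Finset.sum_mul]
        refine Finset.sum_congr rfl (fun b _ => ?_)
        by_cases hc : (locB b = v ∧ mAt μ locT u b) <;> simp [hc]
    calc ∑ u, ∑ v, (fstar u v : ℝ) * ℓ u v
        = ∑ u, ∑ v, ∑ b, (if locB b = v ∧ mAt μ locT u b then ℓ u v else 0) := by
          exact Finset.sum_congr rfl fun u _ => Finset.sum_congr rfl fun v _ => step1 u v
      _ = ∑ u, ∑ b, ∑ v, (if locB b = v ∧ mAt μ locT u b then ℓ u v else 0) := by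
          exact Finset.sum_congr rfl fun u _ => Finset.sum_comm
      _ = ∑ b, ∑ u, ∑ v, (if locB b = v ∧ mAt μ locT u b then ℓ u v else 0) :=
          Finset.sum_comm
      _ = ∑ b, (μ b).elim 0 (fun t => ℓ (locB b) (locT t)) := by
          refine Finset.sum_congr rfl fun b _ => ?_
          by_cases hs : (μ b).isSome
          · obtain ⟨t, ht⟩ := Option.isSome_iff_exists.mp hs
            rw [ht, Option.elim_some]
            have hiff : ∀ u v, (locB b = v ∧ mAt μ locT u b) ↔ (locB b = v ∧ locT t = u) := by
              intro u v
              unfold mAt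
              rw [ht]
              simp
            have hsimp : ∀ u v, (if locB b = v ∧ mAt μ locT u b then ℓ u v else 0) =
                (if locT t = u then (if locB b = v then ℓ u v else 0) else 0) := by
              intro u v
              rw [if_congr (hiff u v) rfl rfl]
              by_cases h1 : locT t = u <;> by_cases h2 : locB b = v <;> simp [h1, h2]
            rw [Finset.sum_congr rfl fun u _ => Finset.sum_congr rfl fun v _ => hsimp u v]
            have hpull : ∀ u, (∑ v, if locT t = u then (if locB b = v then ℓ u v else 0) else 0) =
                (if locT t = u then (∑ v, if locB b = v then ℓ u v else 0) else 0) := by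
              intro u
              by_cases h1 : locT t = u <;> simp [h1]
            rw [Finset.sum_congr rfl fun u _ => hpull u]
            rw [Finset.sum_ite_eq]
            simp only [Finset.mem_univ, if_true]
            rw [Finset.sum_ite_eq]
            simp only [Finset.mem_univ, if_true]
            exact (hlsymm _ _).symm
          · have hn : μ b = none := Option.not_isSome_iff_eq_none.mp hs
            rw [hn, Option.elim_none]
            refine Finset.sum_eq_zero fun u _ => Finset.sum_eq_zero fun v _ => ?_
            rw [if_neg]
            rintro ⟨_, t, hb, _⟩
            exact hs (by rw [hb]; rfl)
  -- cost of g
  have hcostg : ∑ d, ℓ (locD d) (locT (F d)) = ∑ u, ∑ v, (g u v : ℝ) * ℓ u v := by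
    rw [hFsum ℓ, Finset.sum_comm]
    exact Finset.sum_congr rfl fun u _ => Finset.sum_congr rfl fun v _ => by rw [← hlsymm]
  -- split the cost of g over the two kinds of demands
  have hsplit : ∑ d, ℓ (locD d) (locT (F d)) =
      (∑ d : {b // (μ b).isSome}, ℓ (locB d.1) (locT (F (Sum.inl d)))) +
      ∑ t : {t // idleT μ t}, ℓ (locT t.1) (locT (F (Sum.inr t))) := by
    rw [Fintype.sum_sum_type]
    simp only [hlocD, Sum.elim_inl, Sum.elim_inr]
  have hidlepos : 0 ≤ ∑ t : {t // idleT μ t}, ℓ (locT t.1) (locT (F (Sum.inr t))) :=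
    Finset.sum_nonneg fun t _ => hlnn _ _
  have hkey := hmax μ' hμ'match
  rw [hwel', hwelμ] at hkey
  have h5 : ∑ b, (μ b).elim 0 (fun t => ℓ (locB b) (locT t)) ≤
      ∑ d : {b // (μ b).isSome}, ℓ (locB d.1) (locT (F (Sum.inl d))) := by linarith
  calc ∑ u, ∑ v, (fstar u v : ℝ) * ℓ u v
      = ∑ b, (μ b).elim 0 (fun t => ℓ (locB b) (locT t)) := hcostf
    _ ≤ ∑ d : {b // (μ b).isSome}, ℓ (locB d.1) (locT (F (Sum.inl d))) := h5
    _ ≤ ∑ d, ℓ (locD d) (locT (F d)) := by rw [hsplit]; linarith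
    _ = ∑ u, ∑ v, (g u v : ℝ) * ℓ u v := hcostg
end

section
/- Let μ be a welfare-maximizing matching of passengers to taxicabs. If b₁, b₂ ∈ B are two passengers at the same location (loc(b₁) = loc(b₂)) such that b₁ is matched (μ(b₁) ≠ ∅) and b₂ is unmatched (μ(b₂) = ∅), then val(b₁) ≥ val(b₂). That is, in a welfare-maximizing matching, higher-valued passengers at a location are served before lower-valued passengers at the same location. -/
/- Exchange argument: since `b₂` is unmatched, precomposing `μ` with the transposition of `b₁`
and `b₂` hands `b₁`'s taxicab to `b₂` and leaves `b₁` unmatched. This is again a matching, and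
because the two passengers stand at the same location the pickup distance is unchanged, so the
welfare moves by exactly `val b₂ - val b₁`; maximality of `μ` makes this nonpositive. -/

theorem IsMatching.comp_injective {B B' T : Type*} {μ : B → Option T} (hμ : IsMatching μ)
    {e : B' → B} (he : Function.Injective e) : IsMatching (μ ∘ e) :=
  fun _ _ t h₁ h₂ => he (hμ _ _ t h₁ h₂)

theorem welfare_comp_swap_of_eq_none {V B T : Type*} [Fintype B] [DecidableEq B]
    (ℓ : V → V → ℝ) (locB : B → V) (locT : T → V) (val : B → ℝ) (μ : B → Option T)
    {b₁ b₂ : B} {t : T} (hloc : locB b₁ = locB b₂) (h₁ : μ b₁ = some t) (h₂ : μ b₂ = none) :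
    welfare ℓ locB locT val (μ ∘ Equiv.swap b₁ b₂) =
      welfare ℓ locB locT val μ - val b₁ + val b₂ := by
  set w : B → Option T → ℝ := fun b o => o.elim 0 (fun s => val b - ℓ (locB b) (locT s))
  have hswap : welfare ℓ locB locT val (μ ∘ Equiv.swap b₁ b₂) =
      ∑ b, w (Equiv.swap b₁ b₂ b) (μ b) := by
    rw [← Equiv.sum_comp (Equiv.swap b₁ b₂)]
    simp only [welfare, Function.comp_apply, Equiv.swap_apply_self, w]
  have hdiff : ∑ b, (w (Equiv.swap b₁ b₂ b) (μ b) - w b (μ b)) = val b₂ - val b₁ := by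
    rw [Finset.sum_eq_single b₁]
    · simp [w, h₁, hloc]
    · intro b _ hb
      by_cases hb₂ : b = b₂
      · simp [w, hb₂, h₂]
      · rw [Equiv.swap_apply_of_ne_of_ne hb hb₂, sub_self]
    · simp
  rw [Finset.sum_sub_distrib, ← hswap] at hdiff
  simp only [welfare] at hdiff ⊢
  linarith

theorem stmt8_general {V B T : Type*}
    [Fintype B]
    (ℓ : V → V → ℝ)
    (locB : B → V) (locT : T → V) (val : B → ℝ)
    (μ : B → Option T) (hμ : IsMatching μ)
    (hmax : ∀ μ' : B → Option T, IsMatching μ' →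
      welfare ℓ locB locT val μ' ≤ welfare ℓ locB locT val μ)
    (b₁ b₂ : B) (hloc : locB b₁ = locB b₂)
    (h₁ : μ b₁ ≠ none) (h₂ : μ b₂ = none) :
    val b₂ ≤ val b₁ := by
  classical
  obtain ⟨t, ht⟩ := Option.ne_none_iff_exists'.mp h₁
  have hswap := hmax _ (hμ.comp_injective (Equiv.swap b₁ b₂).injective)
  rw [welfare_comp_swap_of_eq_none ℓ locB locT val μ hloc ht h₂] at hswap
  linarith

/-- in a welfare-maximizing matching, if passengers `b₁, b₂` are at the same
location, `b₁` is matched and `b₂` is unmatched, then `val b₂ ≤ val b₁`. -/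
theorem stmt8 {V B T : Type*} [Fintype V] [Nonempty V] [DecidableEq V]
    [Fintype B] [Fintype T] [Nonempty T]
    (ℓ : V → V → ℝ)
    (hl0 : ∀ u, ℓ u u = 0) (hlsymm : ∀ u v, ℓ u v = ℓ v u)
    (hlnn : ∀ u v, 0 ≤ ℓ u v) (hltri : ∀ u v w, ℓ u w ≤ ℓ u v + ℓ v w)
    (locB : B → V) (locT : T → V) (val : B → ℝ) (hval : ∀ b, 0 ≤ val b)
    (μ : B → Option T) (hμ : IsMatching μ)
    (hmax : ∀ μ' : B → Option T, IsMatching μ' →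
      welfare ℓ locB locT val μ' ≤ welfare ℓ locB locT val μ)
    (b₁ b₂ : B) (hloc : locB b₁ = locB b₂)
    (h₁ : μ b₁ ≠ none) (h₂ : μ b₂ = none) :
    val b₂ ≤ val b₁ :=
  stmt8_general ℓ locB locT val μ hμ hmax b₁ b₂ hloc h₁ h₂
end

section
/- Let μ be a matching and p : T → ℝ≥0 prices such that: (i) buyer-optimality holds (for every b with μ(b) = t ≠ ∅ and every t' ∈ T, val(b) − ℓ(loc(b), loc(t)) − p(t) ≥ val(b) − ℓ(loc(b), loc(t')) − p(t')); (ii) every matched passenger has nonnegative utility (μ(b) = t ≠ ∅ implies val(b) − ℓ(loc(b), loc(t)) − p(t) ≥ 0); and (iii) every unmatched passenger has nonpositive utility for every taxicab (μ(b) = ∅ implies val(b) − ℓ(loc(b), loc(t)) − p(t) ≤ 0 for all t ∈ T). Define surge prices r_v = min_{t∈T} (ℓ(v, loc(t)) + p(t)). Then every unmatched passenger b satisfies val(b) ≤ r_{loc(b)}, and every matched passenger b satisfies val(b) ≥ r_{loc(b)}. -/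
/-- Lemma `lemma:envyfree`: let `μ` be a matching and `p` nonnegative prices
such that (i) buyer-optimality holds, (ii) matched passengers have nonnegative utility, and
(iii) unmatched passengers have nonpositive utility for every taxicab.  With surge prices
`r_v = min_{t∈T} (ℓ v (loc t) + p t)`, every unmatched passenger `b` has
`val b ≤ r_{loc b}`, and every matched passenger `b` has `val b ≥ r_{loc b}`. -/
theorem stmt10 {V B T : Type*} [Fintype V] [Nonempty V] [DecidableEq V]
    [Fintype B] [Fintype T] [Nonempty T]
    (ℓ : V → V → ℝ)
    (hl0 : ∀ u, ℓ u u = 0) (hlsymm : ∀ u v, ℓ u v = ℓ v u)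
    (hlnn : ∀ u v, 0 ≤ ℓ u v) (hltri : ∀ u v w, ℓ u w ≤ ℓ u v + ℓ v w)
    (locB : B → V) (locT : T → V) (val : B → ℝ) (hval : ∀ b, 0 ≤ val b)
    (μ : B → Option T) (hμ : IsMatching μ)
    (p : T → ℝ) (hp : ∀ t, 0 ≤ p t)
    (hopt : ∀ b t, μ b = some t → ∀ t' : T,
      val b - ℓ (locB b) (locT t') - p t' ≤ val b - ℓ (locB b) (locT t) - p t)
    (hpos : ∀ b t, μ b = some t → 0 ≤ val b - ℓ (locB b) (locT t) - p t)
    (hneg : ∀ b, μ b = none → ∀ t : T, val b - ℓ (locB b) (locT t) - p t ≤ 0)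
    (r : V → ℝ) (hr : ∀ v, r v = ⨅ t : T, (ℓ v (locT t) + p t)) :
    (∀ b, μ b = none → val b ≤ r (locB b)) ∧
    (∀ b t, μ b = some t → r (locB b) ≤ val b) := by
  constructor
  · intro b hb
    rw [hr]
    apply le_ciInf
    intro t
    have := hneg b hb t
    linarith
  · intro b t hbt
    rw [hr]
    have h1 : (⨅ t : T, (ℓ (locB b) (locT t) + p t)) ≤ ℓ (locB b) (locT t) + p t :=
      ciInf_le (Finite.bddBelow_range _) t
    have := hpos b t hbt
    linarith
end

section
/- Suppose ℓ(i,j) = 1 for all i ≠ j and ℓ(i,i) = 0, and let the supply sequence s be coordinatewise lazy for the demand sequence d. Then, with the convention s^0 = s^1, the social welfare satisfies SW(s,d) = Σ_{t=1}^T Σ_i min(s^{t−1}_i, d^t_i). In particular, writing h^t_i = min(s^{t−1}_i, d^t_i), g^t_i = max_{τ ∈ [t−n, t−1]} d^τ_i (with d^τ_i = 0 for τ ≤ 0) and z^t_i = max(0, h^t_i − g^t_i) for any fixed integer n ≥ 1, we have SW(s,d) ≤ Σ_{t,i} z^t_i + Σ_{t,i} g^t_i. -/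
/-- Social welfare over times `1..T` in the uniform metric (`ℓ(i,j) = 1` for `i ≠ j`),
where the earthmover distance equals the total variation distance. -/
noncomputable def SWu {k : ℕ} (s d : ℕ → Fin k → ℝ) (T : ℕ) : ℝ :=
  (∑ t ∈ Finset.Icc 1 T, ∑ i, min (s t i) (d t i))
    - ∑ t ∈ Finset.Icc 2 T, (1 / 2) * ∑ i, |s (t - 1) i - s t i|

/-- A supply sequence is coordinatewise lazy for a demand sequence. -/
def CoordLazy {k : ℕ} (s d : ℕ → Fin k → ℝ) (T : ℕ) : Prop :=
  ∀ t, 2 ≤ t → t ≤ T → ∀ i,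
    (s (t - 1) i < s t i → s t i ≤ d t i) ∧ (s t i < s (t - 1) i → d t i ≤ s t i)

/-- `gmax d n t i = max_{τ ∈ [t−n, t−1]} d^τ_i` (the inserted point `t−1` already belongs
to the interval whenever `n ≥ 1`, and only guarantees nonemptiness). -/
noncomputable def gmax {k : ℕ} (d : ℕ → Fin k → ℝ) (n t : ℕ) (i : Fin k) : ℝ :=
  (insert (t - 1) (Finset.Icc (t - n) (t - 1))).sup'
    (Finset.insert_nonempty _ _) fun τ => d τ i

/-- Lemma `lemma:opt`: for a coordinatewise lazy supply sequence `s` in the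
uniform metric (with the conventions `s⁰ = s¹` and `d⁰ = 0`), the social welfare equals
`Σ_t Σ_i min(s^{t−1}_i, d^t_i)`; hence, with `h^t_i = min(s^{t−1}_i, d^t_i)`,
`g^t_i = max_{τ∈[t−n,t−1]} d^τ_i` and `z^t_i = max(0, h^t_i − g^t_i)` for any `n ≥ 1`,
`SW(s,d) ≤ Σ_{t,i} z^t_i + Σ_{t,i} g^t_i`. -/
theorem stmt13 {k T : ℕ} (hk : 1 ≤ k) (hT : 1 ≤ T)
    (d : ℕ → Fin k → ℝ)
    (hd : ∀ t ∈ Finset.Icc 1 T, (∀ i, 0 ≤ d t i) ∧ ∑ i, d t i = 1)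
    (hd0 : ∀ i, d 0 i = 0)
    (s : ℕ → Fin k → ℝ)
    (hs : ∀ t ∈ Finset.Icc 1 T, (∀ i, 0 ≤ s t i) ∧ ∑ i, s t i = 1)
    (hs0 : s 0 = s 1)
    (hlazy : CoordLazy s d T)
    (n : ℕ) (hn : 1 ≤ n) :
    SWu s d T = (∑ t ∈ Finset.Icc 1 T, ∑ i, min (s (t - 1) i) (d t i)) ∧
    SWu s d T ≤
      (∑ t ∈ Finset.Icc 1 T, ∑ i, max 0 (min (s (t - 1) i) (d t i) - gmax d n t i)) +
      ∑ t ∈ Finset.Icc 1 T, ∑ i, gmax d n t i := by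
  have habs : ∀ x : ℝ, |x| = max 0 x + max 0 (-x) := by
    intro x
    rcases le_total 0 x with h | h
    · rw [abs_of_nonneg h, max_eq_right h, max_eq_left (neg_nonpos.mpr h)]; ring
    · rw [abs_of_nonpos h, max_eq_left h, max_eq_right (neg_nonneg.mpr h)]; ring
  have hmx : ∀ x : ℝ, max 0 x - max 0 (-x) = x := by
    intro x
    rcases le_total 0 x with h | h
    · rw [max_eq_right h, max_eq_left (neg_nonpos.mpr h)]; ring
    · rw [max_eq_left h, max_eq_right (neg_nonneg.mpr h)]; ring
  have per : ∀ t ∈ Finset.Icc 2 T,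
      (∑ i, min (s t i) (d t i)) - (∑ i, min (s (t - 1) i) (d t i))
        = (1 / 2) * ∑ i, |s (t - 1) i - s t i| := by
    intro t ht
    rw [Finset.mem_Icc] at ht
    have ht1 : (1 : ℕ) ≤ t - 1 := by omega
    have ht2 : t - 1 ≤ T := by omega
    have hst : ∑ i, s t i = 1 := (hs t (Finset.mem_Icc.mpr ⟨by omega, ht.2⟩)).2
    have hst' : ∑ i, s (t - 1) i = 1 := (hs (t - 1) (Finset.mem_Icc.mpr ⟨ht1, ht2⟩)).2
    have hmin : ∀ i, min (s t i) (d t i) - min (s (t - 1) i) (d t i)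
        = max 0 (s t i - s (t - 1) i) := by
      intro i
      obtain ⟨h1, h2⟩ := hlazy t ht.1 ht.2 i
      rcases lt_trichotomy (s (t - 1) i) (s t i) with h | h | h
      · have := h1 h
        simp only [min_def, max_def]; split_ifs <;> linarith
      · rw [h]; simp
      · have := h2 h
        simp only [min_def, max_def]; split_ifs <;> linarith
    have hdelta : ∑ i, (s t i - s (t - 1) i) = 0 := by
      rw [Finset.sum_sub_distrib, hst, hst']; ring
    have e1 : (∑ i, min (s t i) (d t i)) - (∑ i, min (s (t - 1) i) (d t i))
        = ∑ i, max 0 (s t i - s (t - 1) i) := by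
      rw [← Finset.sum_sub_distrib]; exact Finset.sum_congr rfl fun i _ => hmin i
    have e2 : ∑ i, |s (t - 1) i - s t i|
        = (∑ i, max 0 (s t i - s (t - 1) i)) + ∑ i, max 0 (-(s t i - s (t - 1) i)) := by
      rw [← Finset.sum_add_distrib]
      refine Finset.sum_congr rfl fun i _ => ?_
      rw [abs_sub_comm, habs]
    have e3 : (∑ i, max 0 (s t i - s (t - 1) i)) - ∑ i, max 0 (-(s t i - s (t - 1) i))
        = 0 := by
      rw [← Finset.sum_sub_distrib]
      calc ∑ i, (max 0 (s t i - s (t - 1) i) - max 0 (-(s t i - s (t - 1) i)))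
          = ∑ i, (s t i - s (t - 1) i) := Finset.sum_congr rfl fun i _ => hmx _
        _ = 0 := hdelta
    rw [e1, e2]; linarith
  have hins : Finset.Icc 1 T = insert 1 (Finset.Icc 2 T) := by
    ext x; simp only [Finset.mem_Icc, Finset.mem_insert]; omega
  have hnotmem : (1 : ℕ) ∉ Finset.Icc 2 T := by simp
  have key : SWu s d T = ∑ t ∈ Finset.Icc 1 T, ∑ i, min (s (t - 1) i) (d t i) := by
    unfold SWu
    rw [hins, Finset.sum_insert hnotmem, Finset.sum_insert hnotmem]
    have hE : ∑ t ∈ Finset.Icc 2 T, (1 / 2) * ∑ i, |s (t - 1) i - s t i|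
        = (∑ t ∈ Finset.Icc 2 T, ∑ i, min (s t i) (d t i))
          - ∑ t ∈ Finset.Icc 2 T, ∑ i, min (s (t - 1) i) (d t i) := by
      rw [← Finset.sum_sub_distrib]
      exact (Finset.sum_congr rfl fun t ht => (per t ht).symm)
    have h1 : (∑ i, min (s 0 i) (d 1 i)) = ∑ i, min (s 1 i) (d 1 i) := by rw [hs0]
    simp only [Nat.sub_self] at *
    rw [hE, h1]; ring
  refine ⟨key, ?_⟩
  rw [key]
  have hle : ∀ t ∈ Finset.Icc 1 T, (∑ i, min (s (t - 1) i) (d t i))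
      ≤ ∑ i, (max 0 (min (s (t - 1) i) (d t i) - gmax d n t i) + gmax d n t i) := by
    intro t _
    refine Finset.sum_le_sum fun i _ => ?_
    have := le_max_right (0 : ℝ) (min (s (t - 1) i) (d t i) - gmax d n t i)
    linarith
  calc ∑ t ∈ Finset.Icc 1 T, ∑ i, min (s (t - 1) i) (d t i)
      ≤ ∑ t ∈ Finset.Icc 1 T, ∑ i,
          (max 0 (min (s (t - 1) i) (d t i) - gmax d n t i) + gmax d n t i) :=
        Finset.sum_le_sum hle
    _ = (∑ t ∈ Finset.Icc 1 T, ∑ i, max 0 (min (s (t - 1) i) (d t i) - gmax d n t i)) +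
        ∑ t ∈ Finset.Icc 1 T, ∑ i, gmax d n t i := by
        rw [← Finset.sum_add_distrib]
        exact Finset.sum_congr rfl fun t _ => Finset.sum_add_distrib
end

section
/- Let the supply sequence s be coordinatewise lazy for the demand sequence d, where each s^t has nonnegative entries summing to 1. Fix an integer n ≥ 1 and a time t with t − n ≥ 1. With the conventions d^τ_i = 0 for τ ≤ 0 and s^τ = s^1 for τ ≤ 0, define h^τ_i = min(s^{τ−1}_i, d^τ_i), g^τ_i = max_{σ ∈ [τ−n, τ−1]} d^σ_i, and z^τ_i = max(0, h^τ_i − g^τ_i). Then Σ_{i=1}^k Σ_{τ = t−n}^{t−1} z^τ_i ≤ 1. -/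
/-- Lemma `lemma:sum-z`: for a coordinatewise lazy supply sequence `s`
(with conventions `d⁰ = 0` and `s⁰ = s¹`), fix `n ≥ 1` and a time `t` with `t − n ≥ 1`.
With `h^τ_i = min(s^{τ−1}_i, d^τ_i)`, `g^τ_i = max_{σ∈[τ−n,τ−1]} d^σ_i` and
`z^τ_i = max(0, h^τ_i − g^τ_i)`, we have `Σ_i Σ_{τ=t−n}^{t−1} z^τ_i ≤ 1`. -/
theorem stmt16 {k T : ℕ} (hk : 1 ≤ k)
    (d : ℕ → Fin k → ℝ)
    (hd : ∀ t ∈ Finset.Icc 1 T, (∀ i, 0 ≤ d t i) ∧ ∑ i, d t i = 1)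
    (hd0 : ∀ i, d 0 i = 0)
    (s : ℕ → Fin k → ℝ)
    (hs : ∀ t ∈ Finset.Icc 1 T, (∀ i, 0 ≤ s t i) ∧ ∑ i, s t i = 1)
    (hs0 : s 0 = s 1)
    (hlazy : CoordLazy s d T)
    (n t : ℕ) (hn : 1 ≤ n) (htn : 1 ≤ t - n) (ht : t ≤ T) :
    ∑ i, ∑ τ ∈ Finset.Icc (t - n) (t - 1),
        max 0 (min (s (τ - 1) i) (d τ i) - gmax d n τ i) ≤ 1 := by
  have hT2 : 2 ≤ T := by omega
  set a := t - n with ha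
  have ha1 : 1 ≤ a := htn
  have hat : a + n = t := by omega
  have hdnn : ∀ σ, σ ≤ T → ∀ i, 0 ≤ d σ i := by
    intro σ hσ i
    rcases Nat.eq_zero_or_pos σ with h | h
    · simp [h, hd0]
    · exact (hd σ (Finset.mem_Icc.mpr ⟨h, hσ⟩)).1 i
  have hg_ge : ∀ τ (i : Fin k) σ, τ - n ≤ σ → σ ≤ τ - 1 →
      d σ i ≤ gmax d n τ i := by
    intro τ i σ h1 h2
    exact Finset.le_sup' (fun τ => d τ i)
      (Finset.mem_insert_of_mem (Finset.mem_Icc.mpr ⟨h1, h2⟩))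
  have hg0 : ∀ τ, τ ≤ T → ∀ i : Fin k, 0 ≤ gmax d n τ i := by
    intro τ hτ i
    refine le_trans (hdnn (τ - 1) (by omega) i) ?_
    exact Finset.le_sup' (fun τ => d τ i) (Finset.mem_insert_self _ _)
  have hsann : ∀ i : Fin k, 0 ≤ s (a - 1) i := by
    intro i
    rcases Nat.eq_zero_or_pos (a - 1) with h | h
    · rw [h, hs0]; exact (hs 1 (Finset.mem_Icc.mpr ⟨le_rfl, by omega⟩)).1 i
    · exact (hs (a - 1) (Finset.mem_Icc.mpr ⟨h, by omega⟩)).1 i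
  have key : ∀ i : Fin k, ∀ j, j ≤ n → ∃ c : ℝ, 0 ≤ c ∧ c ≤ s (a - 1) i ∧
      (c = 0 ∨ ∃ σ, a ≤ σ ∧ σ ≤ a - 1 + j ∧ c ≤ d σ i) ∧
      ∑ τ ∈ Finset.Icc a (a - 1 + j),
        max 0 (min (s (τ - 1) i) (d τ i) - gmax d n τ i) ≤ c := by
    intro i j
    induction j with
    | zero =>
      intro _
      refine ⟨0, le_rfl, hsann i, Or.inl rfl, ?_⟩
      rw [Finset.Icc_eq_empty (by omega), Finset.sum_empty]
    | succ j ih =>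
      intro hj
      obtain ⟨c, hc0, hcs, hcd, hsum⟩ := ih (by omega)
      have hm : a - 1 + (j + 1) = (a - 1 + j) + 1 := by omega
      set m := a + j with hmdef
      have hm2 : (a - 1 + j) + 1 = m := by omega
      have hmT : m ≤ T := by omega
      have hm1 : 1 ≤ m := by omega
      rw [hm, Finset.sum_Icc_succ_top (show a ≤ (a - 1 + j) + 1 by omega), hm2]
      set g := gmax d n m i with hgdef
      set h := min (s (m - 1) i) (d m i) with hhdef
      have hgnn : 0 ≤ g := hg0 m hmT i
      have hcg : c ≤ g := by
        rcases hcd with rfl | ⟨σ, hσ1, hσ2, hσd⟩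
        · exact hgnn
        · exact le_trans hσd (hg_ge m i σ (by omega) (by omega))
      by_cases hz : h ≤ g
      · refine ⟨c, hc0, hcs, ?_, ?_⟩
        · rcases hcd with h0 | ⟨σ, h1, h2, h3⟩
          · exact Or.inl h0
          · exact Or.inr ⟨σ, h1, by omega, h3⟩
        · rw [max_eq_left (by linarith : h - g ≤ 0)]
          simpa using hsum
      · push_neg at hz
        have hhd : h ≤ d m i := min_le_right _ _
        have hhs : h ≤ s (m - 1) i := min_le_left _ _
        have hdown : ∀ p, p ≤ j → h ≤ s (m - 1 - p) i := by
          intro p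
          induction p with
          | zero => intro _; simpa using hhs
          | succ p ihp =>
            intro hp
            have hsp := ihp (by omega)
            set σ := m - 1 - p with hσdef
            have hστ : m - 1 - (p + 1) = σ - 1 := by omega
            rw [hστ]
            by_contra hlt
            push_neg at hlt
            have hrise : s (σ - 1) i < s σ i := lt_of_lt_of_le hlt hsp
            rcases Nat.lt_or_ge σ 2 with h2 | h2
            · have hσ1 : σ = 1 := by omega
              rw [hσ1, show (1 : ℕ) - 1 = 0 from rfl, hs0] at hrise
              exact lt_irrefl _ hrise
            · have hld := (hlazy σ h2 (by omega) i).1 hrise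
              have hdg : d σ i ≤ g := hg_ge m i σ (by omega) (by omega)
              linarith
        have hsa : h ≤ s (a - 1) i := by
          have := hdown j le_rfl
          rwa [show m - 1 - j = a - 1 from by omega] at this
        refine ⟨h, by linarith, hsa, Or.inr ⟨m, by omega, by omega, hhd⟩, ?_⟩
        rw [max_eq_right (by linarith : (0 : ℝ) ≤ h - g)]
        linarith
  have hIeq : Finset.Icc a (t - 1) = Finset.Icc a (a - 1 + n) := by
    rw [show a - 1 + n = t - 1 from by omega]
  have hfin : ∑ i, s (a - 1) i = 1 := by
    rcases Nat.eq_zero_or_pos (a - 1) with h | h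
    · rw [h, hs0]; exact (hs 1 (Finset.mem_Icc.mpr ⟨le_rfl, by omega⟩)).2
    · exact (hs (a - 1) (Finset.mem_Icc.mpr ⟨h, by omega⟩)).2
  calc ∑ i, ∑ τ ∈ Finset.Icc a (t - 1),
        max 0 (min (s (τ - 1) i) (d τ i) - gmax d n τ i)
      ≤ ∑ i, s (a - 1) i := by
        refine Finset.sum_le_sum fun i _ => ?_
        obtain ⟨c, _, hcs, _, hsum⟩ := key i n le_rfl
        rw [hIeq]
        linarith
    _ = 1 := hfin
end

section
/- Let d ∈ ℝ^k be a demand vector with nonnegative entries summing to 1, and let ρ ≥ 1 be such that d_i ≤ 1/ρ for every i. Then the demand served by the uniform supply (1/k,…,1/k) is at least ρ/k: Σ_{i=1}^k min(1/k, d_i) ≥ ρ/k. -/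
/-- Lemma `lemma:stay`: if `d` is a demand vector (nonnegative, summing to
1) with `d_i ≤ 1/ρ` for all `i`, where `ρ ≥ 1`, then the demand served by the uniform
supply `(1/k, …, 1/k)` is at least `ρ/k`. -/
theorem stmt17 {k : ℕ} (hk : 1 ≤ k)
    (d : Fin k → ℝ) (hd0 : ∀ i, 0 ≤ d i) (hd1 : ∑ i, d i = 1)
    (ρ : ℝ) (hρ : 1 ≤ ρ) (hub : ∀ i, d i ≤ 1 / ρ) :
    ρ / k ≤ ∑ i, min (1 / (k : ℝ)) (d i) := by
  have hρ0 : (0:ℝ) < ρ := lt_of_lt_of_le one_pos hρ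
  have hk0 : (0:ℝ) < k := by exact_mod_cast hk
  -- ρ ≤ k
  have hρk : ρ ≤ (k:ℝ) := by
    have h1 : (1:ℝ) ≤ ∑ i : Fin k, 1 / ρ := by
      calc (1:ℝ) = ∑ i, d i := hd1.symm
      _ ≤ ∑ i : Fin k, 1 / ρ := Finset.sum_le_sum fun i _ => hub i
    simp only [Finset.sum_const, Finset.card_univ, Fintype.card_fin, nsmul_eq_mul] at h1
    have := mul_le_mul_of_nonneg_left h1 hρ0.le
    rw [mul_one] at this
    calc ρ ≤ ρ * ((k:ℝ) * (1/ρ)) := this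
    _ = (k:ℝ) := by field_simp
  have key : ∀ i : Fin k, ρ / k * d i ≤ min (1 / (k:ℝ)) (d i) := by
    intro i
    rcases le_or_gt (d i) (1 / (k:ℝ)) with h | h
    · rw [min_eq_right h]
      have : ρ / k ≤ 1 := by rw [div_le_one hk0]; exact hρk
      nlinarith [hd0 i]
    · rw [min_eq_left h.le]
      have h2 : ρ * d i ≤ 1 := by
        calc ρ * d i ≤ ρ * (1/ρ) := mul_le_mul_of_nonneg_left (hub i) hρ0.le
        _ = 1 := by field_simp
      rw [div_mul_eq_mul_div, div_le_div_iff₀ hk0 hk0]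
      nlinarith
  calc ρ / k = ρ / k * ∑ i, d i := by rw [hd1, mul_one]
  _ = ∑ i, ρ / k * d i := Finset.mul_sum _ _ _
  _ ≤ ∑ i, min (1 / (k:ℝ)) (d i) := Finset.sum_le_sum fun i _ => key i
end

section
/- Let d = (d^1,…,d^T) be a demand sequence whose average drift is δ, i.e. Σ_{t=2}^T (1/2)·Σ_i |d^t_i − d^{t−1}_i| = δ·T, and let s be the matching supply sequence s^t = d^t for all t. Then: (a) if ℓ(i,j) = 1 for all i ≠ j, SW(s,d) = (1 − δ)·T, and since every supply sequence s' satisfies SW(s',d) ≤ T, the matching supply sequence is (1 − δ)-competitive; (b) for a general cost function with ℓ(i,j) ≤ ℓ_max for all i, j, SW(s,d) ≥ (1 − δ·ℓ_max)·T, and hence the matching supply sequence is (1 − δ·ℓ_max)-competitive. -/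
/-- The earthmover distance: the minimum (infimum) cost of a flow from `s` to `s'`. -/
noncomputable def emd {V : Type*} [Fintype V] (ℓ : V → V → ℝ) (s s' : V → ℝ) : ℝ :=
  sInf {c : ℝ | ∃ f, IsFlow f s s' ∧ flowCost ℓ f = c}

/-- Social welfare of a supply sequence `s` for a demand sequence `d` over times `1..T`:
total demand served minus total movement cost. -/
noncomputable def SW {V : Type*} [Fintype V] (ℓ : V → V → ℝ)
    (s d : ℕ → V → ℝ) (T : ℕ) : ℝ :=
  (∑ t ∈ Finset.Icc 1 T, ∑ i, min (s t i) (d t i))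
    - ∑ t ∈ Finset.Icc 2 T, emd ℓ (s (t - 1)) (s t)

/-
Move mass only where it is needed: keep `min (s i) (s' i)` in place and spread the excess
`(s i - s' i)⁺` over the deficits `(s j - s' j)⁻` in proportion to their size. This flow moves
exactly the total variation `D = ½ ∑ |s' i - s i|`, each unit at cost at most `ℓ_max`, so
`em(s, s') ≤ ℓ_max · D`. With unit costs it costs exactly `D`, and no flow is cheaper, because at
least `(s i - s' i)⁺` has to leave location `i`. For the matching supply all demand is served,
so `SW = T - ∑ₜ em(dᵗ⁻¹, dᵗ)`, and the drift hypothesis turns the sum of total variations into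
`δ T`. Any supply serves at most the unit demand per step and pays nonnegative moving costs.
-/

open Finset

section LinearOrderedAddCommGroup

variable {α : Type*} [AddCommGroup α] [LinearOrder α] [IsOrderedAddMonoid α]

lemma min_add_posPart_sub (x y : α) : min x y + (x - y)⁺ = x := by
  rcases le_total x y with h | h
  · simp [min_eq_left h, posPart_eq_zero.mpr (sub_nonpos.mpr h)]
  · simp [min_eq_right h, posPart_eq_self.mpr (sub_nonneg.mpr h)]

lemma min_add_negPart_sub (x y : α) : min x y + (x - y)⁻ = y := by
  rw [← neg_sub, negPart_neg, min_comm]; exact min_add_posPart_sub y x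

end LinearOrderedAddCommGroup

lemma posPart_mul_negPart_eq_zero {α : Type*} [Ring α] [LinearOrder α] [IsOrderedRing α]
    (x : α) : x⁺ * x⁻ = 0 := by
  rcases le_total 0 x with hx | hx
  · simp [negPart_eq_zero.mpr hx]
  · simp [posPart_eq_zero.mpr hx]

section Transport

variable {V : Type*} [Fintype V]

lemma flowCost_nonneg {ℓ f : V → V → ℝ} (hℓ : ∀ i j, 0 ≤ ℓ i j) (hf : ∀ u v, 0 ≤ f u v) :
    0 ≤ flowCost ℓ f :=
  sum_nonneg fun u _ => sum_nonneg fun v _ => mul_nonneg (hf u v) (hℓ u v)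

lemma emd_nonneg {ℓ : V → V → ℝ} (hℓ : ∀ i j, 0 ≤ ℓ i j) (s s' : V → ℝ) : 0 ≤ emd ℓ s s' :=
  Real.sInf_nonneg (by rintro c ⟨f, hf, rfl⟩; exact flowCost_nonneg hℓ hf.1)

lemma emd_le_flowCost {ℓ f : V → V → ℝ} {s s' : V → ℝ} (hℓ : ∀ i j, 0 ≤ ℓ i j)
    (hf : IsFlow f s s') : emd ℓ s s' ≤ flowCost ℓ f :=
  csInf_le ⟨0, by rintro c ⟨g, hg, rfl⟩; exact flowCost_nonneg hℓ hg.1⟩ ⟨f, hf, rfl⟩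

lemma le_emd {ℓ : V → V → ℝ} {s s' : V → ℝ} {c : ℝ} (hflow : ∃ f, IsFlow f s s')
    (h : ∀ f, IsFlow f s s' → c ≤ flowCost ℓ f) : c ≤ emd ℓ s s' := by
  obtain ⟨f, hf⟩ := hflow
  exact le_csInf ⟨_, f, hf, rfl⟩ (by rintro _ ⟨g, hg, rfl⟩; exact h g hg)

lemma sum_negPart_sub_eq_sum_posPart_sub {s s' : V → ℝ} (hsum : ∑ i, s i = ∑ i, s' i) :
    ∑ i, (s i - s' i)⁻ = ∑ i, (s i - s' i)⁺ := by
  have h := sum_congr rfl fun i (_ : i ∈ univ) => posPart_sub_negPart (s i - s' i)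
  rw [sum_sub_distrib, sum_sub_distrib, hsum, sub_self] at h
  linarith

lemma sum_posPart_sub_eq_half_sum_abs {s s' : V → ℝ} (hsum : ∑ i, s i = ∑ i, s' i) :
    ∑ i, (s i - s' i)⁺ = 1 / 2 * ∑ i, |s' i - s i| := by
  simp_rw [abs_sub_comm (s' _), ← posPart_add_negPart, sum_add_distrib,
    sum_negPart_sub_eq_sum_posPart_sub hsum]
  ring

lemma sum_sum_posPart_mul_negPart {s s' : V → ℝ} (hsum : ∑ i, s i = ∑ i, s' i) :
    ∑ i, ∑ j, (s i - s' i)⁺ * (s j - s' j)⁻ = (∑ m, (s m - s' m)⁺) * ∑ m, (s m - s' m)⁺ := by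
  rw [← sum_mul_sum, sum_negPart_sub_eq_sum_posPart_sub hsum]

variable [DecidableEq V]

noncomputable def proportionalFlow (s s' : V → ℝ) (i j : V) : ℝ :=
  (if i = j then min (s i) (s' i) else 0) +
    (s i - s' i)⁺ * (s j - s' j)⁻ / ∑ m, (s m - s' m)⁺

lemma isFlow_proportionalFlow {s s' : V → ℝ} (hs : ∀ i, 0 ≤ s i) (hs' : ∀ i, 0 ≤ s' i)
    (hsum : ∑ i, s i = ∑ i, s' i) : IsFlow (proportionalFlow s s') s s' := by
  have hexcess : ∀ i, ∑ m, (s m - s' m)⁺ = 0 → (s i - s' i)⁺ = 0 := fun i h =>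
    le_antisymm ((single_le_sum (f := fun m => (s m - s' m)⁺) (fun m _ => posPart_nonneg _)
      (mem_univ i)).trans_eq h) (posPart_nonneg _)
  have hdeficit : ∀ j, ∑ m, (s m - s' m)⁺ = 0 → (s j - s' j)⁻ = 0 := fun j h =>
    le_antisymm ((single_le_sum (f := fun m => (s m - s' m)⁻) (fun m _ => negPart_nonneg _)
      (mem_univ j)).trans_eq ((sum_negPart_sub_eq_sum_posPart_sub hsum).trans h))
      (negPart_nonneg _)
  refine ⟨fun i j => ?_, fun i => ?_, fun j => ?_⟩
  · refine add_nonneg ?_ (div_nonneg (mul_nonneg (posPart_nonneg _) (negPart_nonneg _))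
      (sum_nonneg fun m _ => posPart_nonneg _))
    split_ifs
    exacts [le_min (hs i) (hs' i), le_rfl]
  · simp only [proportionalFlow, sum_add_distrib, sum_ite_eq, mem_univ, if_true, ← sum_div,
      ← mul_sum, sum_negPart_sub_eq_sum_posPart_sub hsum, mul_div_cancel_of_imp (hexcess i),
      min_add_posPart_sub]
  · simp only [proportionalFlow, sum_add_distrib, sum_ite_eq', mem_univ, if_true, ← sum_div,
      ← sum_mul, mul_div_cancel_left_of_imp (hdeficit j), min_add_negPart_sub]

lemma flowCost_proportionalFlow {ℓ : V → V → ℝ} (hℓ0 : ∀ i, ℓ i i = 0) (s s' : V → ℝ) :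
    flowCost ℓ (proportionalFlow s s') =
      (∑ i, ∑ j, (s i - s' i)⁺ * (s j - s' j)⁻ * ℓ i j) / ∑ m, (s m - s' m)⁺ := by
  simp only [flowCost, proportionalFlow, add_mul, sum_add_distrib, ite_mul, zero_mul,
    sum_ite_eq, mem_univ, if_true, hℓ0, mul_zero, zero_add, sum_div]
  exact sum_congr rfl fun i _ => sum_congr rfl fun j _ => div_mul_eq_mul_div _ _ _

lemma flowCost_proportionalFlow_le {ℓ : V → V → ℝ} {c : ℝ} (hℓ0 : ∀ i, ℓ i i = 0)
    (hle : ∀ i j, ℓ i j ≤ c) {s s' : V → ℝ} (hsum : ∑ i, s i = ∑ i, s' i) :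
    flowCost ℓ (proportionalFlow s s') ≤ c * ∑ i, (s i - s' i)⁺ := by
  have hcost : ∑ i, ∑ j, (s i - s' i)⁺ * (s j - s' j)⁻ * ℓ i j ≤
      c * ((∑ m, (s m - s' m)⁺) * ∑ m, (s m - s' m)⁺) := by
    rw [← sum_sum_posPart_mul_negPart hsum, mul_sum]
    refine sum_le_sum fun i _ => ?_
    rw [mul_sum]
    exact sum_le_sum fun j _ => by
      rw [mul_comm c]
      exact mul_le_mul_of_nonneg_left (hle i j) (mul_nonneg (posPart_nonneg _) (negPart_nonneg _))
  rw [flowCost_proportionalFlow hℓ0]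
  calc _ ≤ c * ((∑ m, (s m - s' m)⁺) * ∑ m, (s m - s' m)⁺) / ∑ m, (s m - s' m)⁺ :=
        div_le_div_of_nonneg_right hcost (sum_nonneg fun m _ => posPart_nonneg _)
    _ = c * ∑ i, (s i - s' i)⁺ := by rw [mul_div_assoc, mul_self_div_self]

lemma flowCost_proportionalFlow_of_unit {ℓ : V → V → ℝ} (hℓ0 : ∀ i, ℓ i i = 0)
    (hunit : ∀ i j, i ≠ j → ℓ i j = 1) {s s' : V → ℝ} (hsum : ∑ i, s i = ∑ i, s' i) :
    flowCost ℓ (proportionalFlow s s') = ∑ i, (s i - s' i)⁺ := by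
  have hcost : ∀ i j, (s i - s' i)⁺ * (s j - s' j)⁻ * ℓ i j = (s i - s' i)⁺ * (s j - s' j)⁻ := by
    intro i j
    rcases eq_or_ne i j with rfl | h
    · rw [posPart_mul_negPart_eq_zero, zero_mul]
    · rw [hunit i j h, mul_one]
  simp only [flowCost_proportionalFlow hℓ0, hcost, sum_sum_posPart_mul_negPart hsum,
    mul_self_div_self]

lemma sum_posPart_sub_le_flowCost {ℓ f : V → V → ℝ} {s s' : V → ℝ} (hℓ : ∀ i j, 0 ≤ ℓ i j)
    (hℓ1 : ∀ i j, i ≠ j → 1 ≤ ℓ i j) (hf : IsFlow f s s') :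
    ∑ i, (s i - s' i)⁺ ≤ flowCost ℓ f := by
  obtain ⟨hf0, hrow, hcol⟩ := hf
  refine sum_le_sum fun u _ => ?_
  have hstay : f u u ≤ min (s u) (s' u) := le_min
    (hrow u ▸ single_le_sum (fun v _ => hf0 u v) (mem_univ u))
    (hcol u ▸ single_le_sum (fun v _ => hf0 v u) (mem_univ u))
  have hmove : s u - f u u ≤ ∑ v, f u v * ℓ u v := by
    rw [← hrow u, ← add_sum_erase _ _ (mem_univ u), ← add_sum_erase _ _ (mem_univ u),
      add_sub_cancel_left]
    refine le_add_of_nonneg_of_le (mul_nonneg (hf0 u u) (hℓ u u)) (sum_le_sum fun v hv => ?_)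
    exact le_mul_of_one_le_right (hf0 u v) (hℓ1 u v (ne_of_mem_erase hv).symm)
  linarith [min_add_posPart_sub (s u) (s' u)]

theorem emd_eq_half_sum_abs_of_unit {ℓ : V → V → ℝ} (hℓ0 : ∀ i, ℓ i i = 0)
    (hunit : ∀ i j, i ≠ j → ℓ i j = 1) {s s' : V → ℝ} (hs : ∀ i, 0 ≤ s i)
    (hs' : ∀ i, 0 ≤ s' i) (hsum : ∑ i, s i = ∑ i, s' i) :
    emd ℓ s s' = 1 / 2 * ∑ i, |s' i - s i| := by
  have hℓ : ∀ i j, 0 ≤ ℓ i j := fun i j => by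
    rcases eq_or_ne i j with rfl | h
    exacts [(hℓ0 i).ge, (hunit i j h).ge.trans' zero_le_one]
  rw [← sum_posPart_sub_eq_half_sum_abs hsum]
  refine le_antisymm ?_ (le_emd ⟨_, isFlow_proportionalFlow hs hs' hsum⟩ fun f hf =>
    sum_posPart_sub_le_flowCost hℓ (fun i j h => (hunit i j h).ge) hf)
  calc emd ℓ s s' ≤ flowCost ℓ (proportionalFlow s s') :=
        emd_le_flowCost hℓ (isFlow_proportionalFlow hs hs' hsum)
    _ = ∑ i, (s i - s' i)⁺ := flowCost_proportionalFlow_of_unit hℓ0 hunit hsum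

theorem emd_le_mul_half_sum_abs {ℓ : V → V → ℝ} {c : ℝ} (hℓ0 : ∀ i, ℓ i i = 0)
    (hℓ : ∀ i j, 0 ≤ ℓ i j) (hle : ∀ i j, ℓ i j ≤ c) {s s' : V → ℝ} (hs : ∀ i, 0 ≤ s i)
    (hs' : ∀ i, 0 ≤ s' i) (hsum : ∑ i, s i = ∑ i, s' i) :
    emd ℓ s s' ≤ c * (1 / 2 * ∑ i, |s' i - s i|) := by
  rw [← sum_posPart_sub_eq_half_sum_abs hsum]
  calc emd ℓ s s' ≤ flowCost ℓ (proportionalFlow s s') :=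
        emd_le_flowCost hℓ (isFlow_proportionalFlow hs hs' hsum)
    _ ≤ c * ∑ i, (s i - s' i)⁺ := flowCost_proportionalFlow_le hℓ0 hle hsum

end Transport

section Welfare

variable {V : Type*} [Fintype V] {ℓ : V → V → ℝ} {T : ℕ}

lemma SW_le_of_sum_eq_one (hℓ : ∀ i j, 0 ≤ ℓ i j) {s d : ℕ → V → ℝ}
    (hd : ∀ t ∈ Icc 1 T, ∑ i, d t i = 1) : SW ℓ s d T ≤ T := by
  have hserved : ∑ t ∈ Icc 1 T, ∑ i, min (s t i) (d t i) ≤ T :=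
    calc _ ≤ ∑ t ∈ Icc 1 T, ∑ i, d t i :=
          sum_le_sum fun t _ => sum_le_sum fun i _ => min_le_right _ _
      _ = T := by rw [sum_congr rfl hd]; simp
  have hmoved : 0 ≤ ∑ t ∈ Icc 2 T, emd ℓ (s (t - 1)) (s t) :=
    sum_nonneg fun t _ => emd_nonneg hℓ _ _
  unfold SW
  linarith

lemma SW_self_of_sum_eq_one {d : ℕ → V → ℝ} (hd : ∀ t ∈ Icc 1 T, ∑ i, d t i = 1) :
    SW ℓ d d T = T - ∑ t ∈ Icc 2 T, emd ℓ (d (t - 1)) (d t) := by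
  simp only [SW, min_self, sum_congr rfl hd]
  simp

end Welfare

theorem stmt19_general {k T : ℕ}
    (ℓ : Fin k → Fin k → ℝ)
    (hl0 : ∀ i, ℓ i i = 0)
    (hlnn : ∀ i j, 0 ≤ ℓ i j)
    (d : ℕ → Fin k → ℝ)
    (hd : ∀ t ∈ Finset.Icc 1 T, (∀ i, 0 ≤ d t i) ∧ ∑ i, d t i = 1)
    (δ : ℝ)
    (hδ : ∑ t ∈ Finset.Icc 2 T, (1 / 2) * ∑ i, |d t i - d (t - 1) i| = δ * T) :
    ((∀ i j, i ≠ j → ℓ i j = 1) →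
      SW ℓ d d T = (1 - δ) * T ∧
      ∀ s : ℕ → Fin k → ℝ,
        (∀ t ∈ Finset.Icc 1 T, (∀ i, 0 ≤ s t i) ∧ ∑ i, s t i = 1) →
        SW ℓ s d T ≤ T) ∧
    (∀ lmax : ℝ, (∀ i j, ℓ i j ≤ lmax) →
      (1 - δ * lmax) * T ≤ SW ℓ d d T ∧
      ∀ s : ℕ → Fin k → ℝ,
        (∀ t ∈ Finset.Icc 1 T, (∀ i, 0 ≤ s t i) ∧ ∑ i, s t i = 1) →
        SW ℓ s d T ≤ T) := by
  have hsum : ∀ t ∈ Icc 1 T, ∑ i, d t i = 1 := fun t ht => (hd t ht).2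
  have hstep : ∀ t ∈ Icc 2 T, t - 1 ∈ Icc 1 T ∧ t ∈ Icc 1 T := fun t ht => by
    simp only [mem_Icc] at ht ⊢
    omega
  have hmass : ∀ t ∈ Icc 2 T, ∑ i, d (t - 1) i = ∑ i, d t i := fun t ht => by
    rw [hsum _ (hstep t ht).1, hsum _ (hstep t ht).2]
  have hbounded : ∀ s : ℕ → Fin k → ℝ, SW ℓ s d T ≤ T := fun s => SW_le_of_sum_eq_one hlnn hsum
  refine ⟨fun hunit => ⟨?_, fun s _ => hbounded s⟩, fun lmax hle => ⟨?_, fun s _ => hbounded s⟩⟩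
  · have hmoved : ∑ t ∈ Icc 2 T, emd ℓ (d (t - 1)) (d t) = δ * T := by
      rw [← hδ]
      exact sum_congr rfl fun t ht => emd_eq_half_sum_abs_of_unit hl0 hunit
        (hd _ (hstep t ht).1).1 (hd _ (hstep t ht).2).1 (hmass t ht)
    rw [SW_self_of_sum_eq_one hsum, hmoved]
    ring
  · have hmoved : ∑ t ∈ Icc 2 T, emd ℓ (d (t - 1)) (d t) ≤ lmax * (δ * T) := by
      rw [← hδ, mul_sum]
      exact sum_le_sum fun t ht => emd_le_mul_half_sum_abs hl0 hlnn hle (hd _ (hstep t ht).1).1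
        (hd _ (hstep t ht).2).1 (hmass t ht)
    rw [SW_self_of_sum_eq_one hsum]
    linarith

/-- Theorem `thm:restriced drift`: let `d` be a demand sequence with average
drift `δ`, i.e. `Σ_{t=2}^T (1/2)·Σ_i |d^t_i − d^{t−1}_i| = δ·T`, and consider the matching
supply sequence `s^t = d^t`.  (a) If `ℓ(i,j) = 1` for `i ≠ j` then `SW(d,d) = (1−δ)·T`,
and every supply sequence has social welfare at most `T`, so matching is
`(1−δ)`-competitive.  (b) For general costs bounded by `ℓ_max`,
`SW(d,d) ≥ (1 − δ·ℓ_max)·T`, and every supply sequence has social welfare at most `T`, so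
matching is `(1 − δ·ℓ_max)`-competitive. -/
theorem stmt19 {k T : ℕ} (hk : 1 ≤ k) (hT : 1 ≤ T)
    (ℓ : Fin k → Fin k → ℝ)
    (hl0 : ∀ i, ℓ i i = 0) (hlsymm : ∀ i j, ℓ i j = ℓ j i)
    (hlnn : ∀ i j, 0 ≤ ℓ i j) (hltri : ∀ i j m, ℓ i m ≤ ℓ i j + ℓ j m)
    (d : ℕ → Fin k → ℝ)
    (hd : ∀ t ∈ Finset.Icc 1 T, (∀ i, 0 ≤ d t i) ∧ ∑ i, d t i = 1)
    (δ : ℝ)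
    (hδ : ∑ t ∈ Finset.Icc 2 T, (1 / 2) * ∑ i, |d t i - d (t - 1) i| = δ * T) :
    ((∀ i j, i ≠ j → ℓ i j = 1) →
      SW ℓ d d T = (1 - δ) * T ∧
      ∀ s : ℕ → Fin k → ℝ,
        (∀ t ∈ Finset.Icc 1 T, (∀ i, 0 ≤ s t i) ∧ ∑ i, s t i = 1) →
        SW ℓ s d T ≤ T) ∧
    (∀ lmax : ℝ, (∀ i j, ℓ i j ≤ lmax) →
      (1 - δ * lmax) * T ≤ SW ℓ d d T ∧
      ∀ s : ℕ → Fin k → ℝ,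
        (∀ t ∈ Finset.Icc 1 T, (∀ i, 0 ≤ s t i) ∧ ∑ i, s t i = 1) →
        SW ℓ s d T ≤ T) :=
  stmt19_general ℓ hl0 hlnn d hd δ hδ
end
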